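/- arXiv:1510.04838 — 12 statements merged into one kernel-verified Lean document; each statement's English description precedes it below -/
import Mathlib

section
/- For the linear map F(x,y) = (λx, y/λ) with λ > 1, any exponent 0 < p < 1 and any N ∈ ℕ with N ≥ 1, the discrete Lagrangian descriptor has the closed form MD_p(x₀, y₀) = (λ − 1)^p [ |x₀|^p Σ_{i=−N}^{N−1} λ^{ip} + |y₀|^p Σ_{i=−N}^{N−1} λ^{−(i+1)p} ] for all (x₀, y₀) ∈ ℝ². -/
open Filter Real

/-- Discrete Lagrangian descriptor of an orbit `orbit : ℤ → ℝ × ℝ`: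
`MD_p = Σ_{i=-N}^{N-1} (|x_{i+1} - x_i|^p + |y_{i+1} - y_i|^p)`. -/
noncomputable def MDp (p : ℝ) (N : ℕ) (orbit : ℤ → ℝ × ℝ) : ℝ :=
  ∑ i ∈ Finset.Icc (-(N : ℤ)) ((N : ℤ) - 1),
    (|(orbit (i + 1)).1 - (orbit i).1| ^ p + |(orbit (i + 1)).2 - (orbit i).2| ^ p)

/-- For the linear map `F(x,y) = (λ x, y / λ)` with `λ > 1`, `0 < p < 1` and `N ≥ 1`,
`MD_p(x₀,y₀) = (λ-1)^p [ |x₀|^p Σ_{i=-N}^{N-1} λ^{ip} + |y₀|^p Σ_{i=-N}^{N-1} λ^{-(i+1)p} ]`. -/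
theorem stmt_0 (lam p : ℝ) (hlam : 1 < lam) (hp0 : 0 < p) (hp1 : p < 1)
    (N : ℕ) (hN : 1 ≤ N) (x0 y0 : ℝ)
    (orbit : ℤ → ℝ × ℝ) (horbit0 : orbit 0 = (x0, y0))
    (hstep : ∀ i : ℤ, orbit (i + 1) = (lam * (orbit i).1, (orbit i).2 / lam)) :
    MDp p N orbit =
      (lam - 1) ^ p *
        (|x0| ^ p * ∑ i ∈ Finset.Icc (-(N : ℤ)) ((N : ℤ) - 1), (lam ^ i) ^ p +
         |y0| ^ p * ∑ i ∈ Finset.Icc (-(N : ℤ)) ((N : ℤ) - 1), (lam ^ (-(i + 1))) ^ p) := by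
  have hl0 : (0:ℝ) < lam := lt_trans one_pos hlam
  have hlne : lam ≠ 0 := ne_of_gt hl0
  have key : ∀ i : ℤ, orbit i = (lam ^ i * x0, lam ^ (-i) * y0) := by
    intro i
    induction i using Int.induction_on with
    | zero => simpa using horbit0
    | succ k ih =>
      rw [hstep, ih]
      have h1 : lam * (lam ^ (k:ℤ) * x0) = lam ^ ((k:ℤ) + 1) * x0 := by
        rw [zpow_add_one₀ hlne]; ring
      have h2 : lam ^ (-(k:ℤ)) * y0 / lam = lam ^ (-((k:ℤ) + 1)) * y0 := by
        rw [show (-((k:ℤ)+1)) = -(k:ℤ) - 1 by ring, zpow_sub_one₀ hlne]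
        field_simp
      rw [Prod.mk.injEq]
      exact ⟨h1, h2⟩
    | pred k ih =>
      have h := hstep (-(k:ℤ) - 1)
      have he : (-(k:ℤ) - 1) + 1 = -(k:ℤ) := by ring
      rw [he, ih, Prod.mk.injEq] at h
      obtain ⟨h1, h2⟩ := h
      rw [Prod.mk.injEq]
      constructor
      · apply mul_left_cancel₀ hlne
        rw [← h1, zpow_sub_one₀ hlne]
        field_simp
      · have hb := (div_eq_iff hlne).mp h2.symm
        rw [hb, show (-(-(k:ℤ)-1)) = -(-(k:ℤ)) + 1 by ring, zpow_add_one₀ hlne]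
        ring
  unfold MDp
  rw [Finset.mul_sum, Finset.mul_sum, ← Finset.sum_add_distrib, Finset.mul_sum]
  apply Finset.sum_congr rfl
  intro i _
  rw [key i, key (i+1)]
  simp only
  have hx : lam ^ (i + 1) * x0 - lam ^ i * x0 = (lam - 1) * (lam ^ i * x0) := by
    rw [zpow_add_one₀ hlne]; ring
  have hy : lam ^ (-(i + 1)) * y0 - lam ^ (-i) * y0 = -((lam - 1) * (lam ^ (-(i+1)) * y0)) := by
    have : lam ^ (-i) = lam ^ (-(i+1)) * lam := by
      rw [← zpow_add_one₀ hlne]; ring_nf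
    rw [this]; ring
  rw [hx, hy, abs_neg, abs_mul, abs_mul, abs_mul, abs_mul]
  have hz : ∀ j : ℤ, |lam ^ j| = lam ^ j := fun j => abs_of_pos (zpow_pos hl0 j)
  have hl1 : |lam - 1| = lam - 1 := abs_of_pos (by linarith)
  rw [hz, hz, hl1]
  have hzn : ∀ j : ℤ, (0:ℝ) ≤ lam ^ j := fun j => le_of_lt (zpow_pos hl0 j)
  rw [Real.mul_rpow (by linarith) (mul_nonneg (hzn i) (abs_nonneg x0)),
      Real.mul_rpow (hzn i) (abs_nonneg x0),
      Real.mul_rpow (by linarith) (mul_nonneg (hzn (-(i+1))) (abs_nonneg y0)),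
      Real.mul_rpow (hzn (-(i+1))) (abs_nonneg y0)]
  ring
end

section
/- (Theorem 1 of Lopesino et al., as restated in the paper.) For the linear map F(x,y) = (λx, y/λ) with λ > 1, any 0 < p < 1, N ≥ 1, and any fixed x̄ ∈ ℝ, the function y ↦ MD_p(x̄, y) is differentiable at every y ≠ 0 and |d/dy MD_p(x̄, y)| → ∞ as y → 0 with y ≠ 0; i.e., the derivative of MD_p along the vertical line x = x̄ becomes unbounded on the unstable manifold {y = 0} of the origin. -/
open Filter Real

lemma myHasDerivAt_abs_rpow {p : ℝ} (hp : 0 < p) {y : ℝ} (hy : y ≠ 0) :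
    HasDerivAt (fun z : ℝ => |z| ^ p) (p * |y| ^ (p - 1) * Real.sign y) y := by
  rcases hy.lt_or_gt with h | h
  · have h1 : HasDerivAt (fun z : ℝ => (-z) ^ p) ((p * (-y) ^ (p - 1)) * (-1)) y :=
      (Real.hasDerivAt_rpow_const (p := p) (x := -y) (Or.inl (by linarith))).comp y
        (hasDerivAt_neg y)
    have h2 : HasDerivAt (fun z : ℝ => |z| ^ p) ((p * (-y) ^ (p - 1)) * (-1)) y := by
      apply h1.congr_of_eventuallyEq
      filter_upwards [gt_mem_nhds h] with z hz
      rw [abs_of_neg hz]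
    have : (p * (-y) ^ (p - 1)) * (-1) = p * |y| ^ (p - 1) * Real.sign y := by
      rw [abs_of_neg h, Real.sign_of_neg h]
    rwa [this] at h2
  · have h1 : HasDerivAt (fun z : ℝ => z ^ p) (p * y ^ (p - 1)) y :=
      Real.hasDerivAt_rpow_const (Or.inl hy)
    have h2 : HasDerivAt (fun z : ℝ => |z| ^ p) (p * y ^ (p - 1)) y := by
      apply h1.congr_of_eventuallyEq
      filter_upwards [lt_mem_nhds h] with z hz
      rw [abs_of_pos hz]
    have : p * y ^ (p - 1) = p * |y| ^ (p - 1) * Real.sign y := by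
      rw [abs_of_pos h, Real.sign_of_pos h, mul_one]
    rwa [this] at h2

/-- (Theorem 1 of Lopesino et al.) For the linear map `F(x,y) = (λ x, y / λ)` with `λ > 1`,
`0 < p < 1`, `N ≥ 1` and a fixed `x̄`, the function `y ↦ MD_p(x̄, y)` is differentiable at
every `y ≠ 0`, and its derivative blows up as `y → 0`, `y ≠ 0`: the derivative of `MD_p`
along the vertical line `x = x̄` becomes unbounded on the unstable manifold `{y = 0}`. -/
theorem stmt_1 (lam p : ℝ) (hlam : 1 < lam) (hp0 : 0 < p) (hp1 : p < 1)
    (N : ℕ) (hN : 1 ≤ N) (xbar : ℝ)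
    (orbit : ℝ → ℤ → ℝ × ℝ) (horbit0 : ∀ y : ℝ, orbit y 0 = (xbar, y))
    (hstep : ∀ (y : ℝ) (i : ℤ),
      orbit y (i + 1) = (lam * (orbit y i).1, (orbit y i).2 / lam)) :
    (∀ y : ℝ, y ≠ 0 → DifferentiableAt ℝ (fun z : ℝ => MDp p N (orbit z)) y) ∧
      Tendsto (fun y : ℝ => |deriv (fun z : ℝ => MDp p N (orbit z)) y|)
        (nhdsWithin 0 {(0 : ℝ)}ᶜ) atTop := by
  have hlam0 : (0:ℝ) < lam := lt_trans one_pos hlam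
  have hlne : lam ≠ 0 := ne_of_gt hlam0
  -- closed form for the orbit
  have horb : ∀ (y : ℝ) (i : ℤ), orbit y i = (lam ^ i * xbar, y * (lam ^ i)⁻¹) := by
    intro y i
    induction i using Int.induction_on with
    | zero => simp [horbit0]
    | succ n ih =>
      rw [hstep y n, ih]
      refine Prod.ext ?_ ?_ <;> simp only
      · rw [zpow_add_one₀ hlne]; ring
      · rw [zpow_add_one₀ hlne]; field_simp
    | pred n ih =>
      have h := hstep y (-(n:ℤ) - 1)
      rw [sub_add_cancel, ih] at h
      have h1 := congrArg Prod.fst h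
      have h2 := congrArg Prod.snd h
      simp only at h1 h2
      refine Prod.ext ?_ ?_ <;> simp only
      · have : lam ^ (-(n:ℤ) - 1) = lam ^ (-(n:ℤ)) / lam := by
          rw [zpow_sub₀ hlne, zpow_one]
        rw [this]
        field_simp at h1 ⊢
        linarith [h1]
      · have : lam ^ (-(n:ℤ) - 1) = lam ^ (-(n:ℤ)) / lam := by
          rw [zpow_sub₀ hlne, zpow_one]
        rw [this]
        have hpow : lam ^ (-(n:ℤ)) ≠ 0 := zpow_ne_zero _ hlne
        field_simp at h2 ⊢
        linarith [h2]
  set A : ℝ := ∑ i ∈ Finset.Icc (-(N : ℤ)) ((N : ℤ) - 1),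
      |lam ^ (i+1) * xbar - lam ^ i * xbar| ^ p with hA
  set B : ℝ := ∑ i ∈ Finset.Icc (-(N : ℤ)) ((N : ℤ) - 1),
      |(lam ^ (i+1))⁻¹ - (lam ^ i)⁻¹| ^ p with hB
  have hf : (fun z : ℝ => MDp p N (orbit z)) = fun z => A + B * |z| ^ p := by
    funext z
    simp only [MDp, horb]
    rw [Finset.sum_add_distrib, hA, hB, Finset.sum_mul]
    congr 1
    refine Finset.sum_congr rfl fun i _ => ?_
    rw [← mul_sub, abs_mul, Real.mul_rpow (abs_nonneg _) (abs_nonneg _), mul_comm]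
  have hBpos : 0 < B := by
    apply Finset.sum_pos
    · intro i _
      apply Real.rpow_pos_of_pos
      rw [abs_pos, sub_ne_zero]
      intro hiq
      have : lam ^ i < lam ^ (i+1) := zpow_lt_zpow_right₀ hlam (by omega)
      exact (ne_of_lt this) (inv_injective hiq).symm
    · refine ⟨-(N:ℤ), Finset.mem_Icc.2 ⟨le_refl _, ?_⟩⟩
      have : (1:ℤ) ≤ (N:ℤ) := by exact_mod_cast hN
      omega
  have hderiv : ∀ y : ℝ, y ≠ 0 → HasDerivAt (fun z : ℝ => MDp p N (orbit z))
      (B * (p * |y| ^ (p - 1) * Real.sign y)) y := by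
    intro y hy
    rw [hf]
    exact ((myHasDerivAt_abs_rpow hp0 hy).const_mul B).const_add A
  constructor
  · exact fun y hy => (hderiv y hy).differentiableAt
  · have habs : ∀ y : ℝ, y ≠ 0 →
        |deriv (fun z : ℝ => MDp p N (orbit z)) y| = B * p * |y| ^ (p - 1) := by
      intro y hy
      rw [(hderiv y hy).deriv]
      rcases hy.lt_or_gt with h | h
      · rw [Real.sign_of_neg h]
        rw [abs_mul, abs_mul, abs_mul, abs_of_pos hBpos, abs_of_pos hp0,
          abs_of_nonneg (Real.rpow_nonneg (abs_nonneg _) _)]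
        simp [mul_assoc]
      · rw [Real.sign_of_pos h]
        rw [abs_mul, abs_mul, abs_mul, abs_of_pos hBpos, abs_of_pos hp0,
          abs_of_nonneg (Real.rpow_nonneg (abs_nonneg _) _)]
        simp [mul_assoc]
    have h1 : Tendsto (fun x : ℝ => x ^ (p - 1)) (nhdsWithin 0 (Set.Ioi 0)) atTop := by
      have h := (tendsto_rpow_atTop (y := 1 - p) (by linarith)).comp tendsto_inv_nhdsGT_zero
      apply h.congr'
      filter_upwards [self_mem_nhdsWithin] with x hx
      simp only [Function.comp_apply]
      rw [← Real.rpow_neg_one x, ← Real.rpow_mul (le_of_lt hx)]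
      congr 1
      ring
    have h2 : Tendsto (fun y : ℝ => |y|) (nhdsWithin 0 {(0:ℝ)}ᶜ) (nhdsWithin 0 (Set.Ioi 0)) := by
      apply tendsto_nhdsWithin_of_tendsto_nhds_of_eventually_within
      · have := (continuous_abs.tendsto (0:ℝ)).mono_left (nhdsWithin_le_nhds (s := {(0:ℝ)}ᶜ))
        simpa using this
      · filter_upwards [self_mem_nhdsWithin] with y hy
        exact abs_pos.2 hy
    have h3 := h1.comp h2
    have h4 : Tendsto (fun y : ℝ => B * p * |y| ^ (p - 1)) (nhdsWithin 0 {(0:ℝ)}ᶜ) atTop :=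
      Tendsto.const_mul_atTop (mul_pos hBpos hp0) h3
    apply h4.congr'
    filter_upwards [self_mem_nhdsWithin] with y hy
    exact (habs y hy).symm
end

section
/- Consider the map F(x, y) = (2x, y/2 + g(x)), where g : ℝ → [0, ∞) is smooth, g(x) = 0 for all x ∉ [0, 1], and g(x) > 0 for all x ∈ (0, 1). For any fixed x̄ > 2, any 0 < p < 1 and any N ≥ 1, the function y ↦ MD_p(x̄, y) is differentiable at every y ≠ 0 in a punctured neighborhood of 0 and |d/dy MD_p(x̄, y)| → ∞ as y → 0 with y ≠ 0; thus the derivative of MD_p along the vertical line x = x̄ becomes unbounded at y = 0. -/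
open Filter Real

/-- derivative of `y ↦ |α y + β| ^ p` at a point where `α y + β ≠ 0`. -/
lemma hasDerivAt_affine_abs_rpow {p α β y : ℝ} (hu : α * y + β ≠ 0) :
    HasDerivAt (fun z : ℝ => |α * z + β| ^ p)
      (p * |α * y + β| ^ (p - 1) * (SignType.sign (α * y + β) : ℝ) * α) y := by
  have h1 : HasDerivAt (fun z : ℝ => α * z + β) α y := by
    simpa using ((hasDerivAt_id y).const_mul α).add_const β
  have h2 : HasDerivAt (fun u : ℝ => |u|) ((SignType.sign (α * y + β) : ℝ)) (α * y + β) :=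
    hasDerivAt_abs hu
  have h3 : HasDerivAt (fun v : ℝ => v ^ p) (p * |α * y + β| ^ (p - 1)) (|α * y + β|) :=
    Real.hasDerivAt_rpow_const (Or.inl (abs_ne_zero.2 hu))
  have h := h3.comp y (h2.comp y h1)
  rw [show p * |α * y + β| ^ (p - 1) * (SignType.sign (α * y + β) : ℝ) * α
      = p * |α * y + β| ^ (p - 1) * ((SignType.sign (α * y + β) : ℝ) * α) by ring]
  exact h

/-- For the map `F(x,y) = (2x, y/2 + g(x))` with `g` smooth, nonnegative, vanishing
outside `[0,1]` and positive on `(0,1)`, and any `x̄ > 2`, `0 < p < 1`, `N ≥ 1`: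
the function `y ↦ MD_p(x̄, y)` is differentiable at every `y ≠ 0` in a punctured
neighbourhood of `0`, and `|d/dy MD_p(x̄, y)| → ∞` as `y → 0`, `y ≠ 0`. -/
theorem stmt_2 (g : ℝ → ℝ) (hg : ContDiff ℝ (⊤ : ℕ∞) g) (hg0 : ∀ x : ℝ, 0 ≤ g x)
    (hgout : ∀ x : ℝ, x ∉ Set.Icc (0 : ℝ) 1 → g x = 0)
    (hgin : ∀ x ∈ Set.Ioo (0 : ℝ) 1, 0 < g x)
    (p : ℝ) (hp0 : 0 < p) (hp1 : p < 1) (N : ℕ) (hN : 1 ≤ N)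
    (xbar : ℝ) (hxbar : 2 < xbar)
    (orbit : ℝ → ℤ → ℝ × ℝ) (horbit0 : ∀ y : ℝ, orbit y 0 = (xbar, y))
    (hstep : ∀ (y : ℝ) (i : ℤ),
      orbit y (i + 1) = (2 * (orbit y i).1, (orbit y i).2 / 2 + g (orbit y i).1)) :
    (∀ᶠ y in nhdsWithin (0 : ℝ) {(0 : ℝ)}ᶜ,
        DifferentiableAt ℝ (fun z : ℝ => MDp p N (orbit z)) y) ∧
      Tendsto (fun y : ℝ => |deriv (fun z : ℝ => MDp p N (orbit z)) y|)
        (nhdsWithin 0 {(0 : ℝ)}ᶜ) atTop := by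
  have h2ne : (2:ℝ) ≠ 0 := by norm_num
  -- affine structure of the orbit
  have hex : ∀ i : ℤ, ∃ cb : ℝ × ℝ, ∀ y : ℝ,
      orbit y i = (cb.1, (2:ℝ) ^ (-i) * y + cb.2) := by
    intro i
    induction i using Int.induction_on with
    | zero => exact ⟨(xbar, 0), fun y => by simp [horbit0 y]⟩
    | succ n ih =>
      obtain ⟨⟨c, b⟩, hcb⟩ := ih
      refine ⟨(2 * c, b / 2 + g c), fun y => ?_⟩
      rw [hstep y n, hcb y]
      have hz : (2:ℝ) ^ (-((n:ℤ)+1)) = (2:ℝ) ^ (-(n:ℤ)) / 2 := by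
        rw [show -((n:ℤ)+1) = -(n:ℤ) - 1 by ring, zpow_sub₀ h2ne, zpow_one]
      simp only [hz]
      refine Prod.ext rfl ?_
      simp only
      ring
    | pred n ih =>
      obtain ⟨⟨c, b⟩, hcb⟩ := ih
      refine ⟨(c / 2, 2 * b - 2 * g (c / 2)), fun y => ?_⟩
      have heq := hstep y (-(n:ℤ) - 1)
      rw [show -(n:ℤ) - 1 + 1 = -(n:ℤ) by ring, hcb y] at heq
      rw [Prod.ext_iff] at heq
      obtain ⟨h1, h2⟩ := heq
      simp only at h1 h2
      have hu1 : (orbit y (-(n:ℤ) - 1)).1 = c / 2 := by linarith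
      have hu2 : (orbit y (-(n:ℤ) - 1)).2
          = 2 * ((2:ℝ) ^ (n:ℤ) * y + b) - 2 * g (c / 2) := by
        rw [hu1] at h2
        rw [show -(-(n:ℤ)) = (n:ℤ) by ring] at h2
        linarith
      have hz : (2:ℝ) ^ (-(-(n:ℤ) - 1)) = 2 * (2:ℝ) ^ (n:ℤ) := by
        rw [show -(-(n:ℤ) - 1) = (n:ℤ) + 1 by ring, zpow_add₀ h2ne, zpow_one]
        ring
      refine Prod.ext hu1 ?_
      rw [hu2]
      simp only [hz]
      ring
  choose cb hcb using hex
  set c : ℤ → ℝ := fun i => (cb i).1 with hc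
  set b : ℤ → ℝ := fun i => (cb i).2 with hb
  set A : ℤ → ℝ := fun i => (2:ℝ) ^ (-(i+1)) - (2:ℝ) ^ (-i) with hA
  set B : ℤ → ℝ := fun i => b (i+1) - b i with hB
  set K : ℤ → ℝ := fun i => |c (i+1) - c i| ^ p with hK
  have hAeq : ∀ i : ℤ, A i = -((2:ℝ) ^ (-(i+1))) := by
    intro i
    have h2 : (2:ℝ) ^ (-i) = 2 * (2:ℝ) ^ (-(i+1)) := by
      rw [show -i = (-(i+1)) + 1 by ring, zpow_add₀ h2ne, zpow_one]; ring
    show (2:ℝ) ^ (-(i+1)) - (2:ℝ) ^ (-i) = -((2:ℝ) ^ (-(i+1)))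
    rw [h2]; ring
  have hAneg : ∀ i : ℤ, A i < 0 := by
    intro i
    rw [hAeq i]
    have := zpow_pos (by norm_num : (0:ℝ) < 2) (-(i+1))
    linarith
  have hAne : ∀ i : ℤ, A i ≠ 0 := fun i => ne_of_lt (hAneg i)
  have hA0 : A 0 = -(1/2 : ℝ) := by
    rw [hAeq 0]; norm_num
  have hb0 : b 0 = 0 ∧ c 0 = xbar := by
    have h := hcb 0 0
    rw [horbit0 0] at h
    rw [Prod.ext_iff] at h
    constructor
    · have := h.2; simp at this; linarith [this]
    · exact h.1.symm
  have hB0 : B 0 = 0 := by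
    have hgx : g xbar = 0 := hgout xbar (by simp; intro _; linarith)
    have h1 := hcb 1 0
    have h0 := horbit0 (0:ℝ)
    have hs := hstep (0:ℝ) 0
    rw [show ((0:ℤ)+1) = 1 by ring] at hs
    rw [h0] at hs
    simp only at hs
    rw [hs] at h1
    rw [Prod.ext_iff] at h1
    have hb1 : b 1 = 0 := by
      have h2 := h1.2
      simp [hgx] at h2
      exact h2.symm
    show b (0 + 1) - b 0 = 0
    norm_num [hb1, hb0.1]
  have hsum : ∀ y : ℝ, MDp p N (orbit y)
      = ∑ i ∈ Finset.Icc (-(N : ℤ)) ((N : ℤ) - 1), (K i + |A i * y + B i| ^ p) := by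
    intro y
    unfold MDp
    refine Finset.sum_congr rfl fun i _ => ?_
    rw [hcb (i+1) y, hcb i y]
    have harg : ((2:ℝ) ^ (-(i+1)) * y + (cb (i+1)).2) - ((2:ℝ) ^ (-i) * y + (cb i).2)
        = A i * y + B i := by
      simp only [hA, hB, hb]
      ring
    simp only
    rw [harg]
  set D : ℝ → ℝ := fun y => ∑ i ∈ Finset.Icc (-(N : ℤ)) ((N : ℤ) - 1),
      p * |A i * y + B i| ^ (p - 1) * (SignType.sign (A i * y + B i) : ℝ) * A i with hD
  have hderivD : ∀ y : ℝ, (∀ i ∈ Finset.Icc (-(N : ℤ)) ((N : ℤ) - 1), A i * y + B i ≠ 0) →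
      HasDerivAt (fun z : ℝ => MDp p N (orbit z)) (D y) y := by
    intro y hy
    have hfeq : (fun z : ℝ => MDp p N (orbit z))
        = fun z : ℝ => ∑ i ∈ Finset.Icc (-(N : ℤ)) ((N : ℤ) - 1), (K i + |A i * z + B i| ^ p) :=
      funext hsum
    rw [hfeq]
    exact HasDerivAt.fun_sum fun i hi => (hasDerivAt_affine_abs_rpow (hy i hi)).const_add (K i)
  have hgood : ∀ᶠ y in nhdsWithin (0:ℝ) {(0:ℝ)}ᶜ,
      ∀ i ∈ Finset.Icc (-(N : ℤ)) ((N : ℤ) - 1), A i * y + B i ≠ 0 := by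
    rw [eventually_all_finset]
    intro i _
    by_cases hBi : B i = 0
    · filter_upwards [self_mem_nhdsWithin] with y hy
      rw [hBi, add_zero]
      exact mul_ne_zero (hAne i) hy
    · have hcont : ContinuousAt (fun y : ℝ => A i * y + B i) 0 := by fun_prop
      have h := hcont.eventually_ne (by simpa using hBi)
      exact h.filter_mono nhdsWithin_le_nhds
  refine ⟨hgood.mono fun y hy => (hderivD y hy).differentiableAt, ?_⟩
  have hderiv_eq : ∀ᶠ y in nhdsWithin (0:ℝ) {(0:ℝ)}ᶜ,
      deriv (fun z : ℝ => MDp p N (orbit z)) y = D y :=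
    hgood.mono fun y hy => (hderivD y hy).deriv
  have habs_signle : ∀ u : ℝ, |(SignType.sign u : ℝ)| ≤ 1 := by
    intro u
    rcases lt_trichotomy u 0 with h|h|h
    · simp [sign_neg h]
    · simp [h]
    · simp [sign_pos h]
  have habs_sy : ∀ y : ℝ, |Real.sign y| ≤ 1 := by
    intro y
    rcases lt_trichotomy y 0 with h|h|h
    · simp [Real.sign_of_neg h]
    · simp [h, Real.sign_zero]
    · simp [Real.sign_of_pos h]
  have hterm0 : ∀ i : ℤ, ∀ y : ℝ, y ≠ 0 → B i = 0 →
      Real.sign y * (p * |A i * y + B i| ^ (p - 1) * (SignType.sign (A i * y + B i) : ℝ) * A i)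
        = p * |A i * y| ^ (p - 1) * (-(A i)) := by
    intro i y hy hBi
    rw [hBi, add_zero]
    rcases hy.lt_or_gt with h|h
    · have hu : 0 < A i * y := mul_pos_of_neg_of_neg (hAneg i) h
      rw [Real.sign_of_neg h, sign_pos hu, SignType.coe_one]
      ring
    · have hu : A i * y < 0 := mul_neg_of_neg_of_pos (hAneg i) h
      rw [Real.sign_of_pos h, sign_neg hu, SignType.coe_neg_one]
      ring
  set M : ℝ := ∑ i ∈ (Finset.Icc (-(N : ℤ)) ((N : ℤ) - 1)).erase 0,
      p * (|B i| / 2) ^ (p - 1) * |A i| with hM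
  have hbd : ∀ᶠ y in nhdsWithin (0:ℝ) {(0:ℝ)}ᶜ,
      ∀ i ∈ (Finset.Icc (-(N : ℤ)) ((N : ℤ) - 1)).erase 0,
        -(p * (|B i| / 2) ^ (p - 1) * |A i|) ≤
          Real.sign y *
            (p * |A i * y + B i| ^ (p - 1) * (SignType.sign (A i * y + B i) : ℝ) * A i) := by
    rw [eventually_all_finset]
    intro i _
    by_cases hBi : B i = 0
    · filter_upwards [self_mem_nhdsWithin] with y hy
      rw [hterm0 i y hy hBi, hBi]
      have hApos : 0 < -(A i) := by linarith [hAneg i]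
      have h1 : (0:ℝ) ≤ p * |A i * y| ^ (p - 1) * (-(A i)) := by positivity
      have h2 : -(p * (|(0:ℝ)| / 2) ^ (p - 1) * |A i|) = 0 := by
        simp [Real.zero_rpow (by intro h; linarith [h] : p - (1:ℝ) ≠ 0)]
      rw [h2]
      exact h1
    · have hB2 : 0 < |B i| / 2 := by
        have := abs_pos.2 hBi; linarith
      have hApos : 0 < |A i| := abs_pos.2 (hAne i)
      have hev : ∀ᶠ y in nhds (0:ℝ), |y| < |B i| / (2 * |A i|) := by
        have hpos : 0 < |B i| / (2 * |A i|) := by positivity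
        simpa using eventually_abs_sub_lt (0:ℝ) hpos
      filter_upwards [hev.filter_mono nhdsWithin_le_nhds] with y hy
      have hAy : |A i * y| ≤ |B i| / 2 := by
        rw [abs_mul]
        calc |A i| * |y| ≤ |A i| * (|B i| / (2 * |A i|)) :=
              mul_le_mul_of_nonneg_left hy.le (abs_nonneg _)
          _ = |B i| / 2 := by field_simp
      have hu : |B i| / 2 ≤ |A i * y + B i| := by
        have h := abs_add_le (A i * y + B i) (-(A i * y))
        rw [show A i * y + B i + -(A i * y) = B i by ring, abs_neg] at h
        linarith
      have hkey : |A i * y + B i| ^ (p - 1) ≤ (|B i| / 2) ^ (p - 1) :=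
        Real.rpow_le_rpow_of_nonpos hB2 hu (by linarith)
      have hsg : Real.sign y * (SignType.sign (A i * y + B i) : ℝ) ≤ 1 := by
        calc Real.sign y * (SignType.sign (A i * y + B i) : ℝ)
            ≤ |Real.sign y * (SignType.sign (A i * y + B i) : ℝ)| := le_abs_self _
          _ = |Real.sign y| * |(SignType.sign (A i * y + B i) : ℝ)| := abs_mul _ _
          _ ≤ 1 * 1 := mul_le_mul (habs_sy y) (habs_signle _) (abs_nonneg _) zero_le_one
          _ = 1 := mul_one 1
      have hRA : p * |A i * y + B i| ^ (p - 1) * A i ≤ 0 :=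
        mul_nonpos_of_nonneg_of_nonpos (by positivity) (hAneg i).le
      have hstep1 : 1 * (p * |A i * y + B i| ^ (p - 1) * A i)
          ≤ (Real.sign y * (SignType.sign (A i * y + B i) : ℝ))
            * (p * |A i * y + B i| ^ (p - 1) * A i) :=
        mul_le_mul_of_nonpos_right hsg hRA
      have hstep2 : p * (|B i| / 2) ^ (p - 1) * A i ≤ p * |A i * y + B i| ^ (p - 1) * A i := by
        have := mul_le_mul_of_nonpos_right hkey (hAneg i).le
        nlinarith [hp0]
      have hAabs : |A i| = -(A i) := abs_of_neg (hAneg i)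
      have heq : Real.sign y *
            (p * |A i * y + B i| ^ (p - 1) * (SignType.sign (A i * y + B i) : ℝ) * A i)
          = (Real.sign y * (SignType.sign (A i * y + B i) : ℝ))
            * (p * |A i * y + B i| ^ (p - 1) * A i) := by ring
      rw [heq, hAabs]
      have hre : -(p * (|B i| / 2) ^ (p - 1) * -(A i)) = p * (|B i| / 2) ^ (p - 1) * A i := by
        ring
      rw [hre]
      calc p * (|B i| / 2) ^ (p - 1) * A i
          ≤ p * |A i * y + B i| ^ (p - 1) * A i := hstep2
        _ = 1 * (p * |A i * y + B i| ^ (p - 1) * A i) := (one_mul _).symm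
        _ ≤ Real.sign y * (SignType.sign (A i * y + B i) : ℝ)
            * (p * |A i * y + B i| ^ (p - 1) * A i) := hstep1
  have h0mem : (0:ℤ) ∈ Finset.Icc (-(N:ℤ)) ((N:ℤ) - 1) := by
    simp only [Finset.mem_Icc]
    omega
  have hmain : ∀ᶠ y in nhdsWithin (0:ℝ) {(0:ℝ)}ᶜ,
      p / 2 * (|y| / 2) ^ (p - 1) - M ≤ |deriv (fun z : ℝ => MDp p N (orbit z)) y| := by
    filter_upwards [hbd, hderiv_eq, self_mem_nhdsWithin] with y h2 h3 hy0
    replace hy0 : y ≠ 0 := hy0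
    rw [h3]
    have hsplit : Real.sign y * D y
        = Real.sign y * (p * |A 0 * y + B 0| ^ (p - 1)
            * (SignType.sign (A 0 * y + B 0) : ℝ) * A 0)
          + ∑ i ∈ (Finset.Icc (-(N:ℤ)) ((N:ℤ) - 1)).erase 0,
              Real.sign y * (p * |A i * y + B i| ^ (p - 1)
                * (SignType.sign (A i * y + B i) : ℝ) * A i) := by
      rw [hD, Finset.mul_sum, ← Finset.add_sum_erase _ _ h0mem]
    have hT0 : Real.sign y * (p * |A 0 * y + B 0| ^ (p - 1)
          * (SignType.sign (A 0 * y + B 0) : ℝ) * A 0)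
        = p / 2 * (|y| / 2) ^ (p - 1) := by
      rw [hterm0 0 y hy0 hB0, hA0]
      have e : |(-(1/2:ℝ)) * y| = |y| / 2 := by
        rw [abs_mul, abs_neg, abs_of_pos (by norm_num : (0:ℝ) < 1/2)]
        ring
      rw [e]
      ring
    have hsum_ge : -M ≤ ∑ i ∈ (Finset.Icc (-(N:ℤ)) ((N:ℤ) - 1)).erase 0,
        Real.sign y * (p * |A i * y + B i| ^ (p - 1)
          * (SignType.sign (A i * y + B i) : ℝ) * A i) := by
      have hs := Finset.sum_le_sum h2
      rw [Finset.sum_neg_distrib] at hs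
      exact hs
    have hDge : p / 2 * (|y| / 2) ^ (p - 1) - M ≤ Real.sign y * D y := by
      rw [hsplit, hT0]
      linarith
    have hfin : Real.sign y * D y ≤ |D y| := by
      calc Real.sign y * D y ≤ |Real.sign y * D y| := le_abs_self _
        _ = |Real.sign y| * |D y| := abs_mul _ _
        _ ≤ 1 * |D y| := mul_le_mul_of_nonneg_right (habs_sy y) (abs_nonneg _)
        _ = |D y| := one_mul _
    linarith
  have t1 : Tendsto (fun y : ℝ => |y| / 2) (nhdsWithin (0:ℝ) {(0:ℝ)}ᶜ)
      (nhdsWithin (0:ℝ) (Set.Ioi 0)) := by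
    rw [tendsto_nhdsWithin_iff]
    constructor
    · have h := (continuous_abs.div_const 2).tendsto (0:ℝ)
      simp only [abs_zero, zero_div] at h
      exact h.mono_left nhdsWithin_le_nhds
    · filter_upwards [self_mem_nhdsWithin] with y hy
      have hy' : y ≠ 0 := hy
      exact div_pos (abs_pos.2 hy') two_pos
  have t2 : Tendsto (fun x : ℝ => x ^ (p - 1)) (nhdsWithin (0:ℝ) (Set.Ioi 0)) atTop := by
    have e1 : Tendsto (fun x : ℝ => x ^ (1 - p)) (nhdsWithin (0:ℝ) (Set.Ioi 0))
        (nhdsWithin (0:ℝ) (Set.Ioi 0)) := by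
      rw [tendsto_nhdsWithin_iff]
      constructor
      · have hc : ContinuousAt (fun x : ℝ => x ^ (1 - p)) 0 :=
          Real.continuousAt_rpow_const 0 (1 - p) (Or.inr (by linarith))
        have h := hc.tendsto
        rw [Real.zero_rpow (by intro hh; linarith [hh] : (1:ℝ) - p ≠ 0)] at h
        exact h.mono_left nhdsWithin_le_nhds
      · filter_upwards [self_mem_nhdsWithin] with x hx
        exact Real.rpow_pos_of_pos hx _
    have e2 := e1.inv_tendsto_nhdsGT_zero
    refine e2.congr' ?_
    filter_upwards [self_mem_nhdsWithin] with x hx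
    simp only [Pi.inv_apply]
    rw [show p - 1 = -(1 - p) by ring, Real.rpow_neg hx.le]
  have t3 : Tendsto (fun y : ℝ => (|y| / 2) ^ (p - 1)) (nhdsWithin (0:ℝ) {(0:ℝ)}ᶜ) atTop :=
    t2.comp t1
  have t4 : Tendsto (fun y : ℝ => p / 2 * (|y| / 2) ^ (p - 1) - M)
      (nhdsWithin (0:ℝ) {(0:ℝ)}ᶜ) atTop := by
    have h := t3.const_mul_atTop (by positivity : (0:ℝ) < p / 2)
    have h2 := tendsto_atTop_add_const_right _ (-M) h
    refine h2.congr fun y => ?_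
    ring
  exact tendsto_atTop_mono' _ hmain t4
end

section
/- Consider the map F(x, y) = (2x, y/2 + g(x)), where g : ℝ → [0, ∞) is smooth, g(x) = 0 for all x ∉ [0, 1], and g(x) > 0 for all x ∈ (0, 1). For any x̄ > 2, the backward orbit of (x̄, 0) under F, i.e. (F⁻ⁿ(x̄, 0))_{n≥0} where F⁻¹(x, y) = (x/2, 2(y − g(x/2))), has second coordinate tending to −∞ as n → ∞; in particular the backward orbit of (x̄, 0) does not converge to the fixed point (0, 0), so (x̄, 0) does not lie on the unstable manifold of the origin. -/
open Filter Real

/-- For the map `F(x,y) = (2x, y/2 + g(x))` with `g` smooth, nonnegative, vanishing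
outside `[0,1]` and positive on `(0,1)`, and any `x̄ > 2`: the backward orbit of `(x̄, 0)`,
i.e. the orbit of `(x̄,0)` under `F⁻¹(x,y) = (x/2, 2(y - g(x/2)))`, has second coordinate
tending to `-∞`; in particular it does not converge to the fixed point `(0,0)`, so
`(x̄, 0)` is not on the unstable manifold of the origin. -/
theorem stmt_4 (g : ℝ → ℝ) (hg : ContDiff ℝ (⊤ : ℕ∞) g) (hg0 : ∀ x : ℝ, 0 ≤ g x)
    (hgout : ∀ x : ℝ, x ∉ Set.Icc (0 : ℝ) 1 → g x = 0)
    (hgin : ∀ x ∈ Set.Ioo (0 : ℝ) 1, 0 < g x)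
    (Finv : ℝ × ℝ → ℝ × ℝ)
    (hFinv : ∀ q : ℝ × ℝ, Finv q = (q.1 / 2, 2 * (q.2 - g (q.1 / 2))))
    (xbar : ℝ) (hxbar : 2 < xbar) :
    Tendsto (fun n : ℕ => (Finv^[n] (xbar, 0)).2) atTop atBot ∧
      ¬ Tendsto (fun n : ℕ => Finv^[n] (xbar, 0)) atTop (nhds ((0 : ℝ), (0 : ℝ))) := by
  have hx0 : (0:ℝ) < xbar := by linarith
  -- first coordinate formula
  have hfst : ∀ n : ℕ, (Finv^[n] (xbar, 0)).1 = xbar / 2 ^ n := by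
    intro n
    induction n with
    | zero => simp
    | succ n ih =>
      rw [Function.iterate_succ_apply', hFinv, ih]
      simp [pow_succ]
      ring
  set y : ℕ → ℝ := fun n => (Finv^[n] (xbar, 0)).2 with hy
  have hrec : ∀ n : ℕ, y (n + 1) = 2 * (y n - g (xbar / 2 ^ (n + 1))) := by
    intro n
    simp only [hy, Function.iterate_succ_apply', hFinv, hfst]
    simp [pow_succ]
    ring_nf
  have hle0 : ∀ n : ℕ, y n ≤ 0 := by
    intro n
    induction n with
    | zero => simp [hy]
    | succ n ih =>
      rw [hrec n]
      have := hg0 (xbar / 2 ^ (n + 1))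
      nlinarith
  -- find N with xbar / 2^(N+1) ∈ (0,1)
  obtain ⟨N, hN⟩ := pow_unbounded_of_one_lt xbar (by norm_num : (1:ℝ) < 2)
  have hNin : xbar / 2 ^ (N + 1) ∈ Set.Ioo (0:ℝ) 1 := by
    constructor
    · positivity
    · rw [div_lt_one (by positivity)]
      calc xbar < 2 ^ N := hN
        _ ≤ 2 ^ (N + 1) := by
            apply pow_le_pow_right₀ (by norm_num) (Nat.le_succ N)
  have hc : 0 < g (xbar / 2 ^ (N + 1)) := hgin _ hNin
  have hyN : y (N + 1) < 0 := by
    rw [hrec N]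
    have := hle0 N
    nlinarith
  -- y (N+1+n) ≤ 2^n * y (N+1)
  have hkey : ∀ n : ℕ, y (N + 1 + n) ≤ 2 ^ n * y (N + 1) := by
    intro n
    induction n with
    | zero => simp
    | succ n ih =>
      have := hrec (N + 1 + n)
      have hg' := hg0 (xbar / 2 ^ (N + 1 + n + 1))
      have : y (N + 1 + (n + 1)) ≤ 2 * y (N + 1 + n) := by
        rw [show N + 1 + (n + 1) = (N + 1 + n) + 1 by ring, hrec (N + 1 + n)]
        nlinarith
      calc y (N + 1 + (n + 1)) ≤ 2 * y (N + 1 + n) := this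
        _ ≤ 2 * (2 ^ n * y (N + 1)) := by linarith
        _ = 2 ^ (n + 1) * y (N + 1) := by ring
  have htb : Tendsto y atTop atBot := by
    rw [← Filter.tendsto_add_atTop_iff_nat (N + 1)]
    apply tendsto_atBot_mono (fun n => ?_)
      (Tendsto.atTop_mul_const_of_neg hyN (tendsto_pow_atTop_atTop_of_one_lt (by norm_num : (1:ℝ) < 2)))
    calc y (n + (N + 1)) = y (N + 1 + n) := by ring_nf
      _ ≤ 2 ^ n * y (N + 1) := hkey n
  refine ⟨htb, fun hconv => ?_⟩
  have : Tendsto y atTop (nhds 0) := by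
    have := (continuous_snd.tendsto ((0:ℝ), (0:ℝ))).comp hconv
    exact this
  exact this.not_tendsto (disjoint_nhds_atBot 0) htb
end

section
/- (Lemma 2.) Under conditions C1–C4, for every (x₀, y₀) ∈ [−a, a] × (0, ∞), the Lagrangian descriptor of system (Sl) satisfies lim_{τ → ∞} M(τ; x₀, y₀)/M(τ; 0, y₀) = 1. -/
open Filter Real

private lemma sqrt_sq_add_sq_le' (u v : ℝ) : Real.sqrt (u ^ 2 + v ^ 2) ≤ |u| + |v| := by
  have h : u ^ 2 + v ^ 2 ≤ (|u| + |v|) ^ 2 := by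
    nlinarith [sq_abs u, sq_abs v, mul_nonneg (abs_nonneg u) (abs_nonneg v)]
  calc Real.sqrt (u ^ 2 + v ^ 2) ≤ Real.sqrt ((|u| + |v|) ^ 2) := Real.sqrt_le_sqrt h
    _ = |u| + |v| := Real.sqrt_sq (by positivity)

/-- (Lemma 2.) For system (Sl): `x' = f(x), y' = -y f'(x)`, with `f` C², `f(0) = 0`,
satisfying C1 (sign condition), C2 (`|f| ≤ m`), C3 (`f'(0) ≥ f'(x) > 0`) and
C4 (`f' ≡ f'(0)` on `[-a,a]`): for every `(x₀, y₀) ∈ [-a,a] × (0,∞)`,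
`M(τ; x₀, y₀) / M(τ; 0, y₀) → 1` as `τ → ∞`, where `M` is the Lagrangian descriptor
(arclength of the trajectory on `[-τ, τ]`) computed from the flow `φ` of the system. -/
theorem stmt_5 (f : ℝ → ℝ) (m a : ℝ) (ha : 0 < a)
    (hf : ContDiff ℝ 2 f) (hf0 : f 0 = 0)
    (hC1 : ∀ x : ℝ, (0 < x → 0 < f x) ∧ (x < 0 → f x < 0))
    (hC2 : ∀ x : ℝ, |f x| ≤ m)
    (hC3 : ∀ x : ℝ, 0 < deriv f x ∧ deriv f x ≤ deriv f 0)
    (hC4 : ∀ x ∈ Set.Icc (-a) a, deriv f x = deriv f 0)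
    (φ : ℝ × ℝ → ℝ → ℝ × ℝ) (hφ0 : ∀ q : ℝ × ℝ, φ q 0 = q)
    (hφ1 : ∀ (q : ℝ × ℝ) (t : ℝ), HasDerivAt (fun s => (φ q s).1) (f (φ q t).1) t)
    (hφ2 : ∀ (q : ℝ × ℝ) (t : ℝ),
      HasDerivAt (fun s => (φ q s).2) (-(φ q t).2 * deriv f (φ q t).1) t)
    (M : ℝ → ℝ × ℝ → ℝ)
    (hM : ∀ (τ : ℝ) (q : ℝ × ℝ), M τ q =
      ∫ t in (-τ)..τ, Real.sqrt ((f (φ q t).1) ^ 2 + ((φ q t).2 * deriv f (φ q t).1) ^ 2))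
    (x₀ y₀ : ℝ) (hx₀ : x₀ ∈ Set.Icc (-a) a) (hy₀ : 0 < y₀) :
    Tendsto (fun τ : ℝ => M τ (x₀, y₀) / M τ (0, y₀)) atTop (nhds 1) := by
  set k := deriv f 0 with hkdef
  have hk : 0 < k := (hC3 0).1
  have hm : 0 ≤ m := (abs_nonneg _).trans (hC2 0)
  have hfc : Continuous f := hf.continuous
  have hf'c : Continuous (deriv f) := hf.continuous_deriv (by norm_num)
  have hxf : ∀ x : ℝ, 0 ≤ x * f x := by
    intro x
    rcases lt_trichotomy x 0 with h | h | h
    · nlinarith [(hC1 x).2 h]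
    · simp [h]
    · nlinarith [(hC1 x).1 h]
  -- key two-sided estimate on M for initial conditions in [-a,a] × {y₀}
  have key : ∀ q : ℝ × ℝ, q.1 ∈ Set.Icc (-a) a → q.2 = y₀ → ∀ τ : ℝ, 0 ≤ τ →
      y₀ * (Real.exp (k * τ) - 1) ≤ M τ q ∧
      M τ q ≤ y₀ * (Real.exp (k * τ) - 1) + (2 * m + y₀ * k) * τ := by
    intro q hq1 hq2 τ hτ
    have hx : ∀ t, HasDerivAt (fun s => (φ q s).1) (f (φ q t).1) t := hφ1 q
    have hy : ∀ t, HasDerivAt (fun s => (φ q s).2) (-(φ q t).2 * deriv f (φ q t).1) t := hφ2 q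
    have hx0 : (φ q 0).1 = q.1 := by rw [hφ0]
    have hy0 : (φ q 0).2 = q.2 := by rw [hφ0]
    have hxd : Differentiable ℝ (fun t => (φ q t).1) := fun t => (hx t).differentiableAt
    have hyd : Differentiable ℝ (fun t => (φ q t).2) := fun t => (hy t).differentiableAt
    have hxc : Continuous (fun t => (φ q t).1) := hxd.continuous
    have hyc : Continuous (fun t => (φ q t).2) := hyd.continuous
    -- x(t)^2 is monotone
    have hx2 : Monotone (fun t => (φ q t).1 ^ 2) := by
      apply monotone_of_deriv_nonneg
      · exact fun t => ((hx t).pow 2).differentiableAt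
      · intro t
        rw [((hx t).fun_pow 2).deriv]
        norm_num
        nlinarith [hxf (φ q t).1]
    -- y(t)^2 is antitone
    have hy2 : Antitone (fun t => (φ q t).2 ^ 2) := by
      apply antitone_of_deriv_nonpos
      · exact fun t => ((hy t).pow 2).differentiableAt
      · intro t
        rw [((hy t).fun_pow 2).deriv]
        norm_num
        nlinarith [(hC3 (φ q t).1).1, sq_nonneg (φ q t).2]
    -- for t ≤ 0, x(t) ∈ [-a,a]
    have hxa : ∀ t : ℝ, t ≤ 0 → (φ q t).1 ∈ Set.Icc (-a) a := by
      intro t ht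
      have h1 : (φ q t).1 ^ 2 ≤ q.1 ^ 2 := by
        have := hx2 ht
        simpa [hx0] using this
      have h2 : |(φ q t).1| ≤ a := by
        calc |(φ q t).1| = Real.sqrt ((φ q t).1 ^ 2) := (Real.sqrt_sq_eq_abs _).symm
          _ ≤ Real.sqrt (q.1 ^ 2) := Real.sqrt_le_sqrt h1
          _ = |q.1| := Real.sqrt_sq_eq_abs _
          _ ≤ a := abs_le.2 ⟨hq1.1, hq1.2⟩
      exact Set.mem_Icc.2 (abs_le.1 h2)
    have hfx : ∀ t : ℝ, t ≤ 0 → deriv f (φ q t).1 = k := fun t ht => hC4 _ (hxa t ht)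
    -- for t ≤ 0, y(t) = y₀ e^{-kt}
    have hyt : ∀ t : ℝ, t ≤ 0 → (φ q t).2 = y₀ * Real.exp (-(k * t)) := by
      intro t ht
      have hconst : ∀ s ∈ Set.Icc t 0,
          (φ q s).2 * Real.exp (k * s) = (φ q t).2 * Real.exp (k * t) := by
        apply constant_of_has_deriv_right_zero
        · exact (hyc.mul (Real.continuous_exp.comp (continuous_const.mul continuous_id))).continuousOn
        · intro s hs
          have hs0 : s ≤ 0 := hs.2.le
          have hd : HasDerivAt (fun s => (φ q s).2 * Real.exp (k * s)) 0 s := by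
            have h1 := (hy s).fun_mul (((hasDerivAt_id s).const_mul k).exp)
            rw [hfx s hs0] at h1
            refine h1.congr_deriv ?_
            ring
          exact hd.hasDerivWithinAt
      have h0 := hconst 0 ⟨ht, le_refl 0⟩
      rw [hy0, hq2] at h0
      simp only [mul_zero, Real.exp_zero, mul_one] at h0
      rw [Real.exp_neg]
      have he : Real.exp (k * t) ≠ 0 := Real.exp_ne_zero _
      field_simp
      linarith [h0]
    -- for t ≥ 0, |y(t)| ≤ y₀
    have hyb : ∀ t : ℝ, 0 ≤ t → |(φ q t).2| ≤ y₀ := by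
      intro t ht
      have h1 : (φ q t).2 ^ 2 ≤ q.2 ^ 2 := by
        have := hy2 ht
        simpa [hy0] using this
      calc |(φ q t).2| = Real.sqrt ((φ q t).2 ^ 2) := (Real.sqrt_sq_eq_abs _).symm
        _ ≤ Real.sqrt (q.2 ^ 2) := Real.sqrt_le_sqrt h1
        _ = |q.2| := Real.sqrt_sq_eq_abs _
        _ = y₀ := by rw [hq2, abs_of_pos hy₀]
    -- the integrand
    set G : ℝ → ℝ := fun t =>
      Real.sqrt ((f (φ q t).1) ^ 2 + ((φ q t).2 * deriv f (φ q t).1) ^ 2) with hGdef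
    have hGc : Continuous G := by
      apply Real.continuous_sqrt.comp
      exact ((hfc.comp hxc).pow 2).add ((hyc.mul (hf'c.comp hxc)).pow 2)
    have hGnn : ∀ t, 0 ≤ G t := fun t => Real.sqrt_nonneg _
    -- lower bound on [-τ,0]
    have hGlow : ∀ t ∈ Set.Icc (-τ) 0, y₀ * k * Real.exp (-(k * t)) ≤ G t := by
      intro t ht
      have ht0 : t ≤ 0 := ht.2
      have h4 : |(φ q t).2 * deriv f (φ q t).1| ≤ G t := by
        rw [hGdef, ← Real.sqrt_sq_eq_abs]
        apply Real.sqrt_le_sqrt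
        nlinarith [sq_nonneg (f (φ q t).1)]
      rw [hfx t ht0, hyt t ht0] at h4
      rw [abs_of_pos (by positivity)] at h4
      linarith [h4, (by ring : y₀ * Real.exp (-(k * t)) * k = y₀ * k * Real.exp (-(k * t)))]
    -- upper bound everywhere
    have hGup : ∀ t : ℝ, G t ≤ m + |(φ q t).2| * k := by
      intro t
      have h1 : G t ≤ |f (φ q t).1| + |(φ q t).2 * deriv f (φ q t).1| :=
        sqrt_sq_add_sq_le' _ _
      have h2 : |(φ q t).2 * deriv f (φ q t).1| ≤ |(φ q t).2| * k := by
        rw [abs_mul, abs_of_pos (hC3 (φ q t).1).1]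
        exact mul_le_mul_of_nonneg_left (hC3 (φ q t).1).2 (abs_nonneg _)
      linarith [hC2 (φ q t).1]
    -- integral computations
    have hI1 : ∀ t : ℝ, HasDerivAt (fun s => -(y₀ * Real.exp (-(k * s))))
        (y₀ * k * Real.exp (-(k * t))) t := by
      intro t
      have h := ((((hasDerivAt_id t).const_mul k).neg).exp.const_mul y₀).neg
      refine h.congr_deriv ?_
      simp only [id_eq, Pi.neg_apply]
      ring
    have Ilow : ∫ t in (-τ)..0, y₀ * k * Real.exp (-(k * t)) = y₀ * (Real.exp (k * τ) - 1) := by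
      rw [intervalIntegral.integral_eq_sub_of_hasDerivAt (fun t _ => hI1 t)
        (Continuous.intervalIntegrable (by fun_prop) _ _)]
      rw [show -(k * (-τ)) = k * τ by ring]
      simp [Real.exp_zero]
      ring
    have hI2 : ∀ t : ℝ, HasDerivAt (fun s => m * s - y₀ * Real.exp (-(k * s)))
        (m + y₀ * Real.exp (-(k * t)) * k) t := by
      intro t
      have h := ((hasDerivAt_id t).const_mul m).sub
        ((((hasDerivAt_id t).const_mul k).neg).exp.const_mul y₀)
      refine h.congr_deriv ?_
      simp only [id_eq, Pi.neg_apply]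
      ring
    have Iup1 : ∫ t in (-τ)..0, (m + y₀ * Real.exp (-(k * t)) * k)
        = m * τ + y₀ * (Real.exp (k * τ) - 1) := by
      rw [intervalIntegral.integral_eq_sub_of_hasDerivAt (fun t _ => hI2 t)
        (Continuous.intervalIntegrable (by fun_prop) _ _)]
      rw [show -(k * (-τ)) = k * τ by ring]
      simp [Real.exp_zero]
      ring
    have Iup2 : ∫ _t in (0:ℝ)..τ, (m + y₀ * k) = (m + y₀ * k) * τ := by
      rw [intervalIntegral.integral_const]
      simp [smul_eq_mul]
      ring
    -- split M
    have hMG : M τ q = (∫ t in (-τ)..0, G t) + ∫ t in (0:ℝ)..τ, G t := by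
      rw [hM τ q]
      exact (intervalIntegral.integral_add_adjacent_intervals
        (hGc.intervalIntegrable _ _) (hGc.intervalIntegrable _ _)).symm
    have hτ' : -τ ≤ (0:ℝ) := by linarith
    -- lower estimate
    have L1 : y₀ * (Real.exp (k * τ) - 1) ≤ ∫ t in (-τ)..0, G t := by
      rw [← Ilow]
      exact intervalIntegral.integral_mono_on hτ'
        (Continuous.intervalIntegrable (by fun_prop) _ _) (hGc.intervalIntegrable _ _) hGlow
    have L2 : 0 ≤ ∫ t in (0:ℝ)..τ, G t :=
      intervalIntegral.integral_nonneg hτ (fun u _ => hGnn u)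
    -- upper estimates
    have U1 : (∫ t in (-τ)..0, G t) ≤ m * τ + y₀ * (Real.exp (k * τ) - 1) := by
      rw [← Iup1]
      apply intervalIntegral.integral_mono_on hτ' (hGc.intervalIntegrable _ _)
        (Continuous.intervalIntegrable (by fun_prop) _ _)
      intro t ht
      have ht0 : t ≤ 0 := ht.2
      have h1 := hGup t
      rw [hyt t ht0, abs_of_pos (by positivity)] at h1
      linarith
    have U2 : (∫ t in (0:ℝ)..τ, G t) ≤ (m + y₀ * k) * τ := by
      rw [← Iup2]
      apply intervalIntegral.integral_mono_on hτ (hGc.intervalIntegrable _ _)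
        (Continuous.intervalIntegrable (by fun_prop) _ _)
      intro t ht
      have h1 := hGup t
      have h2 := hyb t ht.1
      nlinarith [abs_nonneg (φ q t).2]
    constructor
    · rw [hMG]; linarith
    · rw [hMG]; linarith
  -- apply to the two initial conditions
  have hkey1 := key (x₀, y₀) hx₀ rfl
  have hkey2 := key (0, y₀) (show (0:ℝ) ∈ Set.Icc (-a) a from Set.mem_Icc.2 ⟨by linarith, ha.le⟩) rfl
  set A : ℝ → ℝ := fun τ => y₀ * (Real.exp (k * τ) - 1) with hAdef
  set C : ℝ := 2 * m + y₀ * k with hCdef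
  have hCpos : 0 < C := by positivity
  have hApos : ∀ τ : ℝ, 0 < τ → 0 < A τ := by
    intro τ hτ
    have := Real.add_one_le_exp (k * τ)
    have : 1 < Real.exp (k * τ) := by nlinarith
    simp only [hAdef]
    nlinarith
  have hquad : ∀ x : ℝ, 0 ≤ x → x ^ 2 / 4 + 1 ≤ Real.exp x := by
    intro x hx
    have h1 := Real.add_one_le_exp (x / 2)
    have h2 : Real.exp (x / 2) * Real.exp (x / 2) = Real.exp x := by
      rw [← Real.exp_add]; ring_nf
    nlinarith [Real.exp_pos (x / 2)]
  have hA4 : ∀ τ : ℝ, 0 ≤ τ → y₀ * (k * τ) ^ 2 / 4 ≤ A τ := by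
    intro τ hτ
    have := hquad (k * τ) (by positivity)
    simp only [hAdef]
    nlinarith
  -- C τ / A τ → 0
  have hr0 : Tendsto (fun τ : ℝ => C * τ / A τ) atTop (nhds 0) := by
    have hB : Tendsto (fun τ : ℝ => (4 * C / (y₀ * k ^ 2)) / τ) atTop (nhds 0) :=
      tendsto_const_nhds.div_atTop tendsto_id
    apply tendsto_of_tendsto_of_tendsto_of_le_of_le' tendsto_const_nhds hB
    · filter_upwards [eventually_ge_atTop (1:ℝ)] with τ hτ1
      have hτ0 : (0:ℝ) < τ := lt_of_lt_of_le one_pos hτ1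
      exact div_nonneg (by positivity) (hApos τ hτ0).le
    · filter_upwards [eventually_ge_atTop (1:ℝ)] with τ hτ1
      have hτ0 : (0:ℝ) < τ := lt_of_lt_of_le one_pos hτ1
      have hA := hApos τ hτ0
      have h4 := hA4 τ hτ0.le
      rw [div_le_div_iff₀ hA hτ0]
      have he : 4 * C / (y₀ * k ^ 2) * (y₀ * k ^ 2) = 4 * C := by
        field_simp
      have he2 : 0 ≤ 4 * C / (y₀ * k ^ 2) := by positivity
      have he' : 4 * C / (y₀ * k ^ 2) * (y₀ * (k * τ) ^ 2 / 4) = C * τ ^ 2 := by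
        field_simp
      nlinarith [mul_le_mul_of_nonneg_left h4 he2]
  -- upper comparison function tends to 1
  have hU : Tendsto (fun τ : ℝ => (A τ + C * τ) / A τ) atTop (nhds 1) := by
    have h1 : Tendsto (fun τ : ℝ => 1 + C * τ / A τ) atTop (nhds 1) := by
      have h2 : Tendsto (fun _ : ℝ => (1:ℝ)) atTop (nhds 1) := tendsto_const_nhds
      simpa using h2.add hr0
    apply h1.congr'
    filter_upwards [eventually_ge_atTop (1:ℝ)] with τ hτ1
    have hA := hApos τ (lt_of_lt_of_le one_pos hτ1)
    field_simp
  -- lower comparison function tends to 1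
  have hL : Tendsto (fun τ : ℝ => A τ / (A τ + C * τ)) atTop (nhds 1) := by
    have h1 := hU.inv₀ one_ne_zero
    simp only [inv_div, inv_one] at h1
    exact h1
  apply tendsto_of_tendsto_of_tendsto_of_le_of_le' hL hU
  · filter_upwards [eventually_ge_atTop (1:ℝ)] with τ hτ1
    have hτ0 : (0:ℝ) < τ := lt_of_lt_of_le one_pos hτ1
    obtain ⟨l1, u1⟩ := hkey1 τ hτ0.le
    obtain ⟨l2, u2⟩ := hkey2 τ hτ0.le
    have hA := hApos τ hτ0
    exact div_le_div₀ (hA.le.trans l1) l1 (hA.trans_le l2) u2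
  · filter_upwards [eventually_ge_atTop (1:ℝ)] with τ hτ1
    have hτ0 : (0:ℝ) < τ := lt_of_lt_of_le one_pos hτ1
    obtain ⟨l1, u1⟩ := hkey1 τ hτ0.le
    obtain ⟨l2, u2⟩ := hkey2 τ hτ0.le
    have hA := hApos τ hτ0
    exact div_le_div₀ (by nlinarith [hCpos]) u1 hA l2
end

section
/- Under conditions C1–C4, fix x₀ ∈ [−a, a] and y₀ > 0. Then for all sufficiently large τ > 0 one has M(τ; x₀, 0) ≤ 2mτ < M(τ; 0, y₀) and M(τ; x₀, 2y₀) ≥ 2y₀(e^{f'(0)τ} − 1) ≥ M(τ; 0, y₀); consequently, by continuity of M in the initial condition, there exists ỹ ∈ (0, 2y₀] with M(τ; x₀, ỹ) = M(τ; 0, y₀), i.e. the contour line of M through (0, y₀) meets the vertical line x = x₀. -/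
open Filter Real

/-- For system (Sl) under C1–C4, fix `x₀ ∈ [-a,a]` and `y₀ > 0`. For all sufficiently
large `τ > 0`: `M(τ; x₀, 0) ≤ 2mτ < M(τ; 0, y₀)` and
`M(τ; x₀, 2y₀) ≥ 2y₀(e^{f'(0)τ} - 1) ≥ M(τ; 0, y₀)`; consequently (by continuity of the
flow, hence of `M`, in the initial condition) there is `ỹ ∈ (0, 2y₀]` with
`M(τ; x₀, ỹ) = M(τ; 0, y₀)`: the contour line through `(0, y₀)` meets the line `x = x₀`. -/
theorem stmt_7 (f : ℝ → ℝ) (m a : ℝ) (ha : 0 < a)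
    (hf : ContDiff ℝ 2 f) (hf0 : f 0 = 0)
    (hC1 : ∀ x : ℝ, (0 < x → 0 < f x) ∧ (x < 0 → f x < 0))
    (hC2 : ∀ x : ℝ, |f x| ≤ m)
    (hC3 : ∀ x : ℝ, 0 < deriv f x ∧ deriv f x ≤ deriv f 0)
    (hC4 : ∀ x ∈ Set.Icc (-a) a, deriv f x = deriv f 0)
    (φ : ℝ × ℝ → ℝ → ℝ × ℝ) (hφ0 : ∀ q : ℝ × ℝ, φ q 0 = q)
    (hφ1 : ∀ (q : ℝ × ℝ) (t : ℝ), HasDerivAt (fun s => (φ q s).1) (f (φ q t).1) t)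
    (hφ2 : ∀ (q : ℝ × ℝ) (t : ℝ),
      HasDerivAt (fun s => (φ q s).2) (-(φ q t).2 * deriv f (φ q t).1) t)
    (hφcont : Continuous (Function.uncurry φ))
    (M : ℝ → ℝ × ℝ → ℝ)
    (hM : ∀ (τ : ℝ) (q : ℝ × ℝ), M τ q =
      ∫ t in (-τ)..τ, Real.sqrt ((f (φ q t).1) ^ 2 + ((φ q t).2 * deriv f (φ q t).1) ^ 2))
    (x₀ y₀ : ℝ) (hx₀ : x₀ ∈ Set.Icc (-a) a) (hy₀ : 0 < y₀) :
    ∃ T > 0, ∀ τ > T,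
      (M τ (x₀, 0) ≤ 2 * m * τ ∧ 2 * m * τ < M τ (0, y₀)) ∧
      (M τ (x₀, 2 * y₀) ≥ 2 * y₀ * (Real.exp (deriv f 0 * τ) - 1) ∧
        2 * y₀ * (Real.exp (deriv f 0 * τ) - 1) ≥ M τ (0, y₀)) ∧
      ∃ ytil ∈ Set.Ioc 0 (2 * y₀), M τ (x₀, ytil) = M τ (0, y₀) := by
  set k := deriv f 0 with hkdef
  have hk : 0 < k := (hC3 0).1
  have hm : 0 ≤ m := (abs_nonneg _).trans (hC2 0)
  have hdf : Differentiable ℝ f := hf.differentiable two_ne_zero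
  have hcd : Continuous (deriv f) := hf.continuous_deriv one_le_two
  -- Lipschitz-type bound |f x| ≤ k |x|
  have hfk : ∀ x : ℝ, |f x| ≤ k * |x| := by
    intro x
    have hlip : LipschitzWith (Real.toNNReal k) f := by
      apply lipschitzWith_of_nnnorm_deriv_le hdf
      intro y
      rw [← NNReal.coe_le_coe]
      simpa [Real.norm_eq_abs, abs_of_pos (hC3 y).1, Real.coe_toNNReal _ hk.le] using (hC3 y).2
    have := hlip.dist_le_mul x 0
    simpa [Real.dist_eq, hf0, Real.coe_toNNReal _ hk.le] using this
  have hxfx : ∀ x : ℝ, 0 ≤ x * f x := by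
    intro x
    rcases lt_trichotomy x 0 with h | h | h
    · nlinarith [(hC1 x).2 h]
    · simp [h]
    · nlinarith [(hC1 x).1 h]
  -- continuity of the flow in t
  have hqc : ∀ q : ℝ × ℝ, Continuous (fun t => φ q t) := fun q =>
    hφcont.comp (continuous_const.prodMk continuous_id)
  -- x² is monotone along trajectories
  have hsq_mono : ∀ q : ℝ × ℝ, Monotone (fun t => (φ q t).1 ^ 2) := by
    intro q
    apply monotone_of_deriv_nonneg
    · exact fun t => ((hφ1 q t).pow 2).differentiableAt
    · intro t
      rw [((hφ1 q t).fun_pow 2).deriv]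
      have := hxfx (φ q t).1
      push_cast
      nlinarith
  -- x² · e^{-2kt} is antitone along trajectories
  have hsq_gron : ∀ q : ℝ × ℝ,
      Antitone (fun t => (φ q t).1 ^ 2 * Real.exp (-(2 * k) * t)) := by
    intro q
    have hder : ∀ t : ℝ, HasDerivAt (fun t => (φ q t).1 ^ 2 * Real.exp (-(2 * k) * t))
        ((2 * (φ q t).1 * f (φ q t).1) * Real.exp (-(2 * k) * t)
          + (φ q t).1 ^ 2 * (Real.exp (-(2 * k) * t) * (-(2 * k)))) t := by
      intro t
      have h1 : HasDerivAt (fun t => (φ q t).1 ^ 2) (2 * (φ q t).1 * f (φ q t).1) t := by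
        have := (hφ1 q t).fun_pow 2
        refine this.congr_deriv ?_
        push_cast; ring
      have h2 : HasDerivAt (fun t : ℝ => Real.exp (-(2 * k) * t))
          (Real.exp (-(2 * k) * t) * (-(2 * k))) t := by
        have := ((hasDerivAt_id t).const_mul (-(2 * k))).exp
        simpa [mul_comm] using this
      exact h1.mul h2
    apply antitone_of_deriv_nonpos
    · exact fun t => (hder t).differentiableAt
    · intro t
      rw [(hder t).deriv]
      have h1 : (φ q t).1 * f (φ q t).1 ≤ k * (φ q t).1 ^ 2 := by
        calc (φ q t).1 * f (φ q t).1 ≤ |(φ q t).1 * f (φ q t).1| := le_abs_self _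
        _ = |(φ q t).1| * |f (φ q t).1| := abs_mul _ _
        _ ≤ |(φ q t).1| * (k * |(φ q t).1|) := by
            apply mul_le_mul_of_nonneg_left (hfk _) (abs_nonneg _)
        _ = k * (φ q t).1 ^ 2 := by rw [← sq_abs (φ q t).1]; ring
      have h2 : 0 < Real.exp (-(2 * k) * t) := Real.exp_pos _
      nlinarith
  -- y² is antitone along trajectories
  have hYsq_anti : ∀ q : ℝ × ℝ, Antitone (fun t => (φ q t).2 ^ 2) := by
    intro q
    apply antitone_of_deriv_nonpos
    · exact fun t => ((hφ2 q t).pow 2).differentiableAt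
    · intro t
      rw [((hφ2 q t).fun_pow 2).deriv]
      have h1 := (hC3 (φ q t).1).1
      push_cast
      nlinarith [sq_nonneg (φ q t).2]
  -- y² · e^{2kt} is monotone along trajectories
  have hYsq_gron : ∀ q : ℝ × ℝ,
      Monotone (fun t => (φ q t).2 ^ 2 * Real.exp ((2 * k) * t)) := by
    intro q
    have hder : ∀ t : ℝ, HasDerivAt (fun t => (φ q t).2 ^ 2 * Real.exp ((2 * k) * t))
        ((2 * (φ q t).2 * (-(φ q t).2 * deriv f (φ q t).1)) * Real.exp ((2 * k) * t)
          + (φ q t).2 ^ 2 * (Real.exp ((2 * k) * t) * (2 * k))) t := by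
      intro t
      have h1 : HasDerivAt (fun t => (φ q t).2 ^ 2)
          (2 * (φ q t).2 * (-(φ q t).2 * deriv f (φ q t).1)) t := by
        have := (hφ2 q t).fun_pow 2
        refine this.congr_deriv ?_
        push_cast; ring
      have h2 : HasDerivAt (fun t : ℝ => Real.exp ((2 * k) * t))
          (Real.exp ((2 * k) * t) * (2 * k)) t := by
        have := ((hasDerivAt_id t).const_mul (2 * k)).exp
        simpa [mul_comm] using this
      exact h1.mul h2
    apply monotone_of_deriv_nonneg
    · exact fun t => (hder t).differentiableAt
    · intro t
      rw [(hder t).deriv]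
      have h1 := (hC3 (φ q t).1).2
      have h2 : 0 < Real.exp ((2 * k) * t) := Real.exp_pos _
      nlinarith [mul_nonneg (mul_nonneg (sub_nonneg.mpr h1) (sq_nonneg (φ q t).2)) h2.le]
  -- x ≡ 0 along the trajectory of (0, y₀)
  have hX0 : ∀ t : ℝ, (φ (0, y₀) t).1 = 0 := by
    intro t
    have h0 : (φ (0, y₀) 0).1 = 0 := by rw [hφ0]
    have hsq : (φ (0, y₀) t).1 ^ 2 = 0 := by
      rcases le_total t 0 with ht | ht
      · have := hsq_mono (0, y₀) ht
        simp only [h0] at this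
        nlinarith [sq_nonneg (φ (0, y₀) t).1]
      · have := hsq_gron (0, y₀) ht
        simp only [h0] at this
        nlinarith [sq_nonneg (φ (0, y₀) t).1, Real.exp_pos (-(2 * k) * t),
          Real.exp_pos (-(2 * k) * 0)]
    exact pow_eq_zero_iff two_ne_zero |>.mp hsq
  -- y ≡ 0 along the trajectory of (x₀, 0)
  have hY0 : ∀ t : ℝ, (φ (x₀, 0) t).2 = 0 := by
    intro t
    have h0 : (φ (x₀, 0) 0).2 = 0 := by rw [hφ0]
    have hsq : (φ (x₀, 0) t).2 ^ 2 = 0 := by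
      rcases le_total t 0 with ht | ht
      · have := hYsq_gron (x₀, 0) ht
        simp only [h0] at this
        nlinarith [sq_nonneg (φ (x₀, 0) t).2, Real.exp_pos ((2 * k) * t),
          Real.exp_pos ((2 * k) * 0)]
      · have := hYsq_anti (x₀, 0) ht
        simp only [h0] at this
        nlinarith [sq_nonneg (φ (x₀, 0) t).2]
    exact pow_eq_zero_iff two_ne_zero |>.mp hsq
  -- explicit y along the trajectory of (0, y₀)
  have hYexp : ∀ t : ℝ, (φ (0, y₀) t).2 = y₀ * Real.exp (-(k * t)) := by
    have hder : ∀ t : ℝ, HasDerivAt (fun t => (φ (0, y₀) t).2 * Real.exp (k * t)) 0 t := by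
      intro t
      have h2 : HasDerivAt (fun t : ℝ => Real.exp (k * t)) (Real.exp (k * t) * k) t := by
        have := ((hasDerivAt_id t).const_mul k).exp
        simpa [mul_comm] using this
      have := (hφ2 (0, y₀) t).mul h2
      refine this.congr_deriv ?_
      rw [hX0 t, ← hkdef]
      ring
    have hconst : ∀ t : ℝ, (φ (0, y₀) t).2 * Real.exp (k * t) = y₀ := by
      intro t
      have := is_const_of_deriv_eq_zero (fun s => (hder s).differentiableAt)
        (fun s => (hder s).deriv) t 0
      simpa [hφ0] using this
    intro t
    have h := hconst t
    have h2 : Real.exp (k * t) ≠ 0 := Real.exp_ne_zero _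
    field_simp [Real.exp_neg] at h ⊢
    rw [Real.exp_neg, eq_mul_inv_iff_mul_eq₀ h2]; exact h
  -- continuity of the integrand
  have hcont_t : ∀ q : ℝ × ℝ, Continuous (fun t =>
      Real.sqrt ((f (φ q t).1) ^ 2 + ((φ q t).2 * deriv f (φ q t).1) ^ 2)) := by
    intro q
    have hq := hqc q
    exact Real.continuous_sqrt.comp
      (((hf.continuous.comp (continuous_fst.comp hq)).pow 2).add
        (((continuous_snd.comp hq).mul (hcd.comp (continuous_fst.comp hq))).pow 2))
  -- the value of M at (0, y₀)
  have hMval : ∀ τ : ℝ, M τ (0, y₀) = y₀ * (Real.exp (k * τ) - Real.exp (-(k * τ))) := by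
    intro τ
    rw [hM]
    have h1 : ∀ t ∈ Set.uIcc (-τ) τ, Real.sqrt ((f (φ (0, y₀) t).1) ^ 2
        + ((φ (0, y₀) t).2 * deriv f (φ (0, y₀) t).1) ^ 2)
        = y₀ * k * Real.exp (-(k * t)) := by
      intro t _
      rw [hX0 t, hf0, hYexp t, ← hkdef]
      rw [show (0:ℝ) ^ 2 + (y₀ * Real.exp (-(k * t)) * k) ^ 2
          = (y₀ * k * Real.exp (-(k * t))) ^ 2 by ring]
      rw [Real.sqrt_sq (by positivity)]
    rw [intervalIntegral.integral_congr h1]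
    have hF : ∀ t : ℝ, HasDerivAt (fun t : ℝ => -y₀ * Real.exp (-(k * t)))
        (y₀ * k * Real.exp (-(k * t))) t := by
      intro t
      have hlin : HasDerivAt (fun t : ℝ => -(k * t)) (-k) t := by
        simpa using ((hasDerivAt_id t).const_mul k).fun_neg
      have := (hlin.exp).const_mul (-y₀)
      refine this.congr_deriv ?_
      ring
    rw [intervalIntegral.integral_eq_sub_of_hasDerivAt (fun t _ => hF t)
      ((by fun_prop : Continuous (fun t : ℝ => y₀ * k * Real.exp (-(k * t)))).intervalIntegrable _ _)]
    rw [show -(k * -τ) = k * τ by ring]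
    ring
  -- M at (x₀, 0) is at most 2mτ
  have hMx0 : ∀ τ : ℝ, 0 ≤ τ → M τ (x₀, 0) ≤ 2 * m * τ := by
    intro τ hτ
    rw [hM]
    have hb : ∀ t ∈ Set.Icc (-τ) τ, Real.sqrt ((f (φ (x₀, 0) t).1) ^ 2
        + ((φ (x₀, 0) t).2 * deriv f (φ (x₀, 0) t).1) ^ 2) ≤ m := by
      intro t _
      rw [hY0 t]
      simp only [zero_mul, ne_eq, OfNat.ofNat_ne_zero, not_false_eq_true, zero_pow, add_zero]
      rw [Real.sqrt_sq_eq_abs]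
      exact hC2 _
    calc (∫ t in (-τ)..τ, Real.sqrt ((f (φ (x₀, 0) t).1) ^ 2
        + ((φ (x₀, 0) t).2 * deriv f (φ (x₀, 0) t).1) ^ 2))
        ≤ ∫ _ in (-τ)..τ, m := by
          apply intervalIntegral.integral_mono_on (by linarith)
            ((hcont_t (x₀, 0)).intervalIntegrable _ _) intervalIntegrable_const hb
      _ = 2 * m * τ := by
          rw [intervalIntegral.integral_const]
          simp only [smul_eq_mul]
          ring
  -- backward invariance for (x₀, 2y₀)
  have hderivk : ∀ t : ℝ, t ≤ 0 → deriv f (φ (x₀, 2 * y₀) t).1 = k := by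
    intro t ht
    apply hC4
    have hmono := hsq_mono (x₀, 2 * y₀) ht
    simp only [hφ0] at hmono
    have hx2 : x₀ ^ 2 ≤ a ^ 2 := by nlinarith [hx₀.1, hx₀.2]
    constructor <;> nlinarith [hmono]
  -- explicit y on [-τ, 0] along the trajectory of (x₀, 2y₀)
  have hY2 : ∀ τ : ℝ, 0 < τ → ∀ t ∈ Set.Icc (-τ) (0:ℝ),
      (φ (x₀, 2 * y₀) t).2 = 2 * y₀ * Real.exp (-(k * t)) := by
    intro τ hτ t ht
    set F := fun t : ℝ => (φ (x₀, 2 * y₀) t).2 * Real.exp (k * t) with hFdef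
    have hFder : ∀ x : ℝ, x ≤ 0 → HasDerivAt F 0 x := by
      intro x hx
      have h2 : HasDerivAt (fun t : ℝ => Real.exp (k * t)) (Real.exp (k * x) * k) x := by
        have := ((hasDerivAt_id x).const_mul k).exp
        simpa [mul_comm] using this
      have := (hφ2 (x₀, 2 * y₀) x).mul h2
      refine this.congr_deriv ?_
      rw [hderivk x hx]
      ring
    have hcF : ContinuousOn F (Set.Icc (-τ) 0) := by
      apply Continuous.continuousOn
      exact (continuous_snd.comp (hqc (x₀, 2 * y₀))).mul (by fun_prop)
    have hconst := constant_of_has_deriv_right_zero hcF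
      (fun x hx => (hFder x (le_of_lt hx.2)).hasDerivWithinAt)
    have h1 : F t = F (-τ) := hconst t ht
    have h2 : F 0 = F (-τ) := hconst 0 ⟨by linarith, le_refl 0⟩
    have h3 : F t = F 0 := by rw [h1, h2]
    have h4 : F 0 = 2 * y₀ := by
      simp [hFdef, hφ0]
    rw [h4] at h3
    have h5 : Real.exp (k * t) ≠ 0 := Real.exp_ne_zero _
    simp only [hFdef] at h3
    field_simp [Real.exp_neg]
    rw [Real.exp_neg, eq_mul_inv_iff_mul_eq₀ h5]; exact h3
  -- lower bound for M at (x₀, 2y₀)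
  have hMlow : ∀ τ : ℝ, 0 < τ →
      M τ (x₀, 2 * y₀) ≥ 2 * y₀ * (Real.exp (k * τ) - 1) := by
    intro τ hτ
    rw [hM]
    have hint1 : IntervalIntegrable (fun t => Real.sqrt ((f (φ (x₀, 2 * y₀) t).1) ^ 2
        + ((φ (x₀, 2 * y₀) t).2 * deriv f (φ (x₀, 2 * y₀) t).1) ^ 2))
        MeasureTheory.volume (-τ) 0 := (hcont_t _).intervalIntegrable _ _
    have hint2 : IntervalIntegrable (fun t => Real.sqrt ((f (φ (x₀, 2 * y₀) t).1) ^ 2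
        + ((φ (x₀, 2 * y₀) t).2 * deriv f (φ (x₀, 2 * y₀) t).1) ^ 2))
        MeasureTheory.volume 0 τ := (hcont_t _).intervalIntegrable _ _
    rw [← intervalIntegral.integral_add_adjacent_intervals hint1 hint2]
    have h2 : 0 ≤ ∫ t in (0:ℝ)..τ, Real.sqrt ((f (φ (x₀, 2 * y₀) t).1) ^ 2
        + ((φ (x₀, 2 * y₀) t).2 * deriv f (φ (x₀, 2 * y₀) t).1) ^ 2) :=
      intervalIntegral.integral_nonneg hτ.le (fun u _ => Real.sqrt_nonneg _)
    have h1 : (∫ t in (-τ)..(0:ℝ), 2 * y₀ * k * Real.exp (-(k * t)))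
        ≤ ∫ t in (-τ)..(0:ℝ), Real.sqrt ((f (φ (x₀, 2 * y₀) t).1) ^ 2
          + ((φ (x₀, 2 * y₀) t).2 * deriv f (φ (x₀, 2 * y₀) t).1) ^ 2) := by
      apply intervalIntegral.integral_mono_on (by linarith)
        ((by fun_prop :
          Continuous (fun t : ℝ => 2 * y₀ * k * Real.exp (-(k * t)))).intervalIntegrable _ _)
        hint1
      intro t ht
      rw [hY2 τ hτ t ht, hderivk t ht.2]
      have hle : (2 * y₀ * k * Real.exp (-(k * t))) ^ 2
          ≤ (f (φ (x₀, 2 * y₀) t).1) ^ 2 + (2 * y₀ * Real.exp (-(k * t)) * k) ^ 2 := by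
        nlinarith [sq_nonneg (f (φ (x₀, 2 * y₀) t).1)]
      calc 2 * y₀ * k * Real.exp (-(k * t))
          = Real.sqrt ((2 * y₀ * k * Real.exp (-(k * t))) ^ 2) := by
            rw [Real.sqrt_sq (by positivity)]
        _ ≤ _ := Real.sqrt_le_sqrt hle
    have hval : (∫ t in (-τ)..(0:ℝ), 2 * y₀ * k * Real.exp (-(k * t)))
        = 2 * y₀ * (Real.exp (k * τ) - 1) := by
      have hF : ∀ t : ℝ, HasDerivAt (fun t : ℝ => -(2 * y₀) * Real.exp (-(k * t)))
          (2 * y₀ * k * Real.exp (-(k * t))) t := by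
        intro t
        have hlin : HasDerivAt (fun t : ℝ => -(k * t)) (-k) t := by
          simpa using ((hasDerivAt_id t).const_mul k).fun_neg
        have := (hlin.exp).const_mul (-(2 * y₀))
        refine this.congr_deriv ?_
        ring
      rw [intervalIntegral.integral_eq_sub_of_hasDerivAt (fun t _ => hF t)
        ((by fun_prop : Continuous
          (fun t : ℝ => 2 * y₀ * k * Real.exp (-(k * t)))).intervalIntegrable _ _)]
      rw [show -(k * -τ) = k * τ by ring, show -(k * (0:ℝ)) = 0 by ring, Real.exp_zero]
      ring
    rw [hval] at h1
    linarith
  -- comparison: 2y₀(e^{kτ}-1) ≥ M τ (0,y₀)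
  have hchain : ∀ τ : ℝ, 0 < τ →
      2 * y₀ * (Real.exp (k * τ) - 1) ≥ M τ (0, y₀) := by
    intro τ hτ
    rw [hMval]
    have hmul : Real.exp (k * τ) * Real.exp (-(k * τ)) = 1 := by
      rw [← Real.exp_add]; simp
    nlinarith [sq_nonneg (Real.exp (k * τ) - 1), Real.exp_pos (-(k * τ)),
      Real.exp_pos (k * τ)]
  -- choose T
  refine ⟨1 + 8 * m / (y₀ * k ^ 2), by positivity, ?_⟩
  intro τ hτ
  have hτ1 : 1 + 8 * m / (y₀ * k ^ 2) < τ := hτ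
  have hτpos : 0 < τ := by
    have : (0:ℝ) ≤ 8 * m / (y₀ * k ^ 2) := by positivity
    linarith
  -- the key growth estimate: 2mτ < M τ (0, y₀)
  have hgrow : 2 * m * τ < M τ (0, y₀) := by
    rw [hMval]
    have hpos : 0 < y₀ * k ^ 2 := by positivity
    have hT' : 8 * m < τ * (y₀ * k ^ 2) := by
      have h8 : 8 * m / (y₀ * k ^ 2) < τ := by linarith
      exact (div_lt_iff₀ hpos).mp h8
    have hE1 : 1 + k * τ / 2 ≤ Real.exp (k * τ / 2) := by
      have := Real.add_one_le_exp (k * τ / 2)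
      linarith
    have hE : (1 + k * τ / 2) ^ 2 ≤ Real.exp (k * τ) := by
      have h2 : Real.exp (k * τ) = Real.exp (k * τ / 2) ^ 2 := by
        rw [sq, ← Real.exp_add]; ring_nf
      rw [h2]
      have hpos2 : (0:ℝ) ≤ 1 + k * τ / 2 := by positivity
      nlinarith
    have hE2 : Real.exp (-(k * τ)) ≤ 1 := Real.exp_le_one_iff.mpr (by nlinarith)
    nlinarith [mul_pos hy₀ (mul_pos hk hτpos)]
  have hMx0' := hMx0 τ hτpos.le
  have hMlow' := hMlow τ hτpos
  have hchain' := hchain τ hτpos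
  refine ⟨⟨hMx0', hgrow⟩, ⟨hMlow', hchain'⟩, ?_⟩
  -- continuity of y ↦ M τ (x₀, y) and IVT
  have hFcont : Continuous (Function.uncurry (fun (y : ℝ) (t : ℝ) =>
      Real.sqrt ((f (φ (x₀, y) t).1) ^ 2
        + ((φ (x₀, y) t).2 * deriv f (φ (x₀, y) t).1) ^ 2))) := by
    have hψ : Continuous (fun p : ℝ × ℝ => φ (x₀, p.1) p.2) :=
      hφcont.comp ((continuous_const.prodMk continuous_fst).prodMk continuous_snd)
    exact Real.continuous_sqrt.comp
      (((hf.continuous.comp (continuous_fst.comp hψ)).pow 2).add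
        (((continuous_snd.comp hψ).mul (hcd.comp (continuous_fst.comp hψ))).pow 2))
  have hMcont : Continuous (fun y : ℝ => M τ (x₀, y)) := by
    have h1 : Continuous (fun y : ℝ => ∫ t in (-τ)..τ,
        Real.sqrt ((f (φ (x₀, y) t).1) ^ 2
          + ((φ (x₀, y) t).2 * deriv f (φ (x₀, y) t).1) ^ 2)) :=
      intervalIntegral.continuous_parametric_intervalIntegral_of_continuous' hFcont (-τ) τ
    have h2 : (fun y : ℝ => M τ (x₀, y)) = fun y : ℝ => ∫ t in (-τ)..τ,
        Real.sqrt ((f (φ (x₀, y) t).1) ^ 2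
          + ((φ (x₀, y) t).2 * deriv f (φ (x₀, y) t).1) ^ 2) :=
      funext fun y => hM τ (x₀, y)
    rw [h2]; exact h1
  have hsub := intermediate_value_Icc (by linarith : (0:ℝ) ≤ 2 * y₀) hMcont.continuousOn
  have hmem : M τ (0, y₀) ∈ Set.Icc (M τ (x₀, 0)) (M τ (x₀, 2 * y₀)) := by
    constructor
    · linarith
    · linarith
  obtain ⟨ytil, hy, heq⟩ := hsub hmem
  refine ⟨ytil, ⟨?_, hy.2⟩, heq⟩
  rcases lt_or_eq_of_le hy.1 with h | h
  · exact h
  · exfalso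
    rw [← h] at heq
    linarith
end

section
/- Under conditions C1–C4, for every x₀ ∈ [−a, a], y₀ > 0 and τ > 0, the Lagrangian descriptor of system (Sl) satisfies the lower bound M(τ; x₀, y₀) ≥ y₀ (e^{f'(0)τ} − 1). -/
open Filter Real

/-- For system (Sl) under C1–C4, for every `x₀ ∈ [-a,a]`, `y₀ > 0` and `τ > 0`,
the Lagrangian descriptor satisfies `M(τ; x₀, y₀) ≥ y₀ (e^{f'(0)τ} - 1)`. -/
theorem stmt_9 (f : ℝ → ℝ) (m a : ℝ) (ha : 0 < a)
    (hf : ContDiff ℝ 2 f) (hf0 : f 0 = 0)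
    (hC1 : ∀ x : ℝ, (0 < x → 0 < f x) ∧ (x < 0 → f x < 0))
    (hC2 : ∀ x : ℝ, |f x| ≤ m)
    (hC3 : ∀ x : ℝ, 0 < deriv f x ∧ deriv f x ≤ deriv f 0)
    (hC4 : ∀ x ∈ Set.Icc (-a) a, deriv f x = deriv f 0)
    (φ : ℝ × ℝ → ℝ → ℝ × ℝ) (hφ0 : ∀ q : ℝ × ℝ, φ q 0 = q)
    (hφ1 : ∀ (q : ℝ × ℝ) (t : ℝ), HasDerivAt (fun s => (φ q s).1) (f (φ q t).1) t)
    (hφ2 : ∀ (q : ℝ × ℝ) (t : ℝ),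
      HasDerivAt (fun s => (φ q s).2) (-(φ q t).2 * deriv f (φ q t).1) t)
    (M : ℝ → ℝ × ℝ → ℝ)
    (hM : ∀ (τ : ℝ) (q : ℝ × ℝ), M τ q =
      ∫ t in (-τ)..τ, Real.sqrt ((f (φ q t).1) ^ 2 + ((φ q t).2 * deriv f (φ q t).1) ^ 2))
    (x₀ y₀ τ : ℝ) (hx₀ : x₀ ∈ Set.Icc (-a) a) (hy₀ : 0 < y₀) (hτ : 0 < τ) :
    M τ (x₀, y₀) ≥ y₀ * (Real.exp (deriv f 0 * τ) - 1) := by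
  set k := deriv f 0 with hkdef
  have hk : 0 < k := (hC3 0).1
  set q : ℝ × ℝ := (x₀, y₀) with hq
  set x : ℝ → ℝ := fun t => (φ q t).1 with hxdef
  set y : ℝ → ℝ := fun t => (φ q t).2 with hydef
  have hx0 : x 0 = x₀ := by simp [hxdef, hφ0, hq]
  have hy0 : y 0 = y₀ := by simp [hydef, hφ0, hq]
  have hx' : ∀ t, HasDerivAt x (f (x t)) t := fun t => hφ1 q t
  have hy' : ∀ t, HasDerivAt y (-y t * deriv f (x t)) t := fun t => hφ2 q t
  have hxc : Continuous x := by
    rw [continuous_iff_continuousAt]; exact fun t => (hx' t).continuousAt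
  have hyc : Continuous y := by
    rw [continuous_iff_continuousAt]; exact fun t => (hy' t).continuousAt
  have hfc : Continuous f := hf.continuous
  have hf'c : Continuous (deriv f) := hf.continuous_deriv one_le_two
  -- x(t)^2 is monotone
  have hw' : ∀ t, HasDerivAt (fun s => x s ^ 2) (2 * x t * f (x t)) t := by
    intro t
    have := (hx' t).fun_pow 2
    simpa [mul_comm, mul_assoc, mul_left_comm] using this
  have hwmono : Monotone (fun s => x s ^ 2) := by
    apply monotone_of_deriv_nonneg
    · exact fun t => (hw' t).differentiableAt
    · intro t
      rw [(hw' t).deriv]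
      rcases lt_trichotomy (x t) 0 with h | h | h
      · have := (hC1 (x t)).2 h
        nlinarith
      · simp [h]
      · have := (hC1 (x t)).1 h
        nlinarith
  -- for t ≤ 0, x t ∈ [-a, a]
  have hxa : ∀ t ≤ (0:ℝ), x t ∈ Set.Icc (-a) a := by
    intro t ht
    have h1 : x t ^ 2 ≤ x 0 ^ 2 := hwmono ht
    rw [hx0] at h1
    have h2 : x₀ ^ 2 ≤ a ^ 2 := by
      obtain ⟨hl, hr⟩ := hx₀
      nlinarith
    have h3 : |x t| ≤ a := by
      rw [← Real.sqrt_sq_eq_abs]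
      calc Real.sqrt (x t ^ 2) ≤ Real.sqrt (a ^ 2) := Real.sqrt_le_sqrt (h1.trans h2)
        _ = a := by rw [Real.sqrt_sq ha.le]
    exact abs_le.mp h3
  have hk4 : ∀ t ≤ (0:ℝ), deriv f (x t) = k := fun t ht => hC4 _ (hxa t ht)
  -- y(t) * exp(k t) is constant on [-τ, 0]
  have hh' : ∀ t, HasDerivAt (fun s => y s * Real.exp (k * s))
      ((k - deriv f (x t)) * (y t * Real.exp (k * t))) t := by
    intro t
    have he : HasDerivAt (fun s => Real.exp (k * s)) (k * Real.exp (k * t)) t := by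
      have := ((hasDerivAt_id t).const_mul k).exp
      simpa [mul_comm] using this
    have := (hy' t).fun_mul he
    exact this.congr_deriv (by ring)
  have hyτ : y (-τ) = y₀ * Real.exp (k * τ) := by
    have h := constant_of_has_deriv_right_zero
      (f := fun s => y s * Real.exp (k * s)) (a := -τ) (b := 0)
      (fun t _ => ((hh' t).continuousAt.continuousWithinAt))
      (by
        intro t ht
        have hkt : deriv f (x t) = k := hk4 t ht.2.le
        have := (hh' t).hasDerivWithinAt (s := Set.Ici t)
        rw [hkt] at this
        simpa using this)
    have h0 := h 0 ⟨by linarith, le_refl 0⟩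
    simp only [mul_zero, Real.exp_zero, mul_one, hy0] at h0
    have h1 : y (-τ) * Real.exp (k * (-τ)) * Real.exp (k * τ) = y₀ * Real.exp (k * τ) := by
      rw [← h0]
    rw [mul_assoc, ← Real.exp_add] at h1
    have : k * (-τ) + k * τ = 0 := by ring
    rw [this, Real.exp_zero, mul_one] at h1
    exact h1
  -- integral part
  set G : ℝ → ℝ := fun t => Real.sqrt ((f (x t))^2 + (y t * deriv f (x t))^2) with hGdef
  set B : ℝ → ℝ := fun t => y t * deriv f (x t) with hBdef
  have hBc : Continuous B := hyc.mul (hf'c.comp hxc)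
  have hGc : Continuous G :=
    (((hfc.comp hxc).pow 2).add (hBc.pow 2)).sqrt
  have hGint : ∀ u v : ℝ, IntervalIntegrable G MeasureTheory.volume u v :=
    fun u v => hGc.intervalIntegrable u v
  have hBint : ∀ u v : ℝ, IntervalIntegrable B MeasureTheory.volume u v :=
    fun u v => hBc.intervalIntegrable u v
  have hGnn : ∀ t, 0 ≤ G t := fun t => Real.sqrt_nonneg _
  have hGB : ∀ t, B t ≤ G t := by
    intro t
    calc B t ≤ |B t| := le_abs_self _
      _ = Real.sqrt (B t ^ 2) := (Real.sqrt_sq_eq_abs _).symm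
      _ ≤ G t := Real.sqrt_le_sqrt (by simp only [hBdef]; nlinarith [sq_nonneg (f (x t))])
  have hftc : ∫ t in (-τ)..0, B t = (-(y 0)) - (-(y (-τ))) := by
    apply intervalIntegral.integral_eq_sub_of_hasDerivAt (f := fun t => -y t) (f' := B)
    · intro t _
      have := (hy' t).fun_neg
      convert this using 1
      simp [hBdef]
    · exact hBint _ _
  have hB0 : ∫ t in (-τ)..0, B t = y₀ * (Real.exp (k * τ) - 1) := by
    rw [hftc, hy0, hyτ]; ring
  have hsplit : ∫ t in (-τ)..τ, G t = (∫ t in (-τ)..0, G t) + ∫ t in (0:ℝ)..τ, G t :=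
    (intervalIntegral.integral_add_adjacent_intervals (hGint _ _) (hGint _ _)).symm
  have h1 : ∫ t in (-τ)..0, B t ≤ ∫ t in (-τ)..0, G t :=
    intervalIntegral.integral_mono_on (by linarith) (hBint _ _) (hGint _ _)
      (fun t _ => hGB t)
  have h2 : (0:ℝ) ≤ ∫ t in (0:ℝ)..τ, G t :=
    intervalIntegral.integral_nonneg hτ.le (fun t _ => hGnn t)
  have hMq : M τ q = ∫ t in (-τ)..τ, G t := hM τ q
  rw [hMq, hsplit]
  linarith [hB0 ▸ h1]
end

section
/- Under conditions C1–C3 with |f(x)| ≤ m for all x, for every x₀ ∈ ℝ, y₀ > 0 and τ > 0, the Lagrangian descriptor of system (Sl) satisfies the upper bound M(τ; x₀, y₀) ≤ τ √(m² + y₀² f'(0)²) + ∫_{−τ}^{0} √(m² + y₀² e^{−2 f'(0) t} f'(0)²) dt. -/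
open Filter Real

/-- For system (Sl) under C1–C3 with `|f| ≤ m`, for every `x₀ ∈ ℝ`, `y₀ > 0` and `τ > 0`,
`M(τ; x₀, y₀) ≤ τ √(m² + y₀² f'(0)²) + ∫_{-τ}^{0} √(m² + y₀² e^{-2f'(0)t} f'(0)²) dt`. -/
theorem stmt_10 (f : ℝ → ℝ) (m : ℝ)
    (hf : ContDiff ℝ 2 f) (hf0 : f 0 = 0)
    (hC1 : ∀ x : ℝ, (0 < x → 0 < f x) ∧ (x < 0 → f x < 0))
    (hC2 : ∀ x : ℝ, |f x| ≤ m)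
    (hC3 : ∀ x : ℝ, 0 < deriv f x ∧ deriv f x ≤ deriv f 0)
    (φ : ℝ × ℝ → ℝ → ℝ × ℝ) (hφ0 : ∀ q : ℝ × ℝ, φ q 0 = q)
    (hφ1 : ∀ (q : ℝ × ℝ) (t : ℝ), HasDerivAt (fun s => (φ q s).1) (f (φ q t).1) t)
    (hφ2 : ∀ (q : ℝ × ℝ) (t : ℝ),
      HasDerivAt (fun s => (φ q s).2) (-(φ q t).2 * deriv f (φ q t).1) t)
    (M : ℝ → ℝ × ℝ → ℝ)
    (hM : ∀ (τ : ℝ) (q : ℝ × ℝ), M τ q =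
      ∫ t in (-τ)..τ, Real.sqrt ((f (φ q t).1) ^ 2 + ((φ q t).2 * deriv f (φ q t).1) ^ 2))
    (x₀ y₀ τ : ℝ) (hy₀ : 0 < y₀) (hτ : 0 < τ) :
    M τ (x₀, y₀) ≤ τ * Real.sqrt (m ^ 2 + y₀ ^ 2 * (deriv f 0) ^ 2) +
      ∫ t in (-τ)..(0 : ℝ),
        Real.sqrt (m ^ 2 + y₀ ^ 2 * Real.exp (-2 * deriv f 0 * t) * (deriv f 0) ^ 2) := by
  set q : ℝ × ℝ := (x₀, y₀) with hq
  have hd0 : 0 < deriv f 0 := (hC3 0).1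
  have hm0 : 0 ≤ m := le_trans (abs_nonneg _) (hC2 0)
  -- continuity facts
  have hdc : Continuous (deriv f) := hf.continuous_deriv one_le_two
  have hxc : Continuous fun t => (φ q t).1 :=
    continuous_iff_continuousAt.mpr fun t => (hφ1 q t).continuousAt
  have hyc : Continuous fun t => (φ q t).2 :=
    continuous_iff_continuousAt.mpr fun t => (hφ2 q t).continuousAt
  have hgc : Continuous fun s => deriv f (φ q s).1 := hdc.comp hxc
  -- F t = ∫₀ᵗ f'(x(s)) ds
  set F : ℝ → ℝ := fun t => ∫ s in (0:ℝ)..t, deriv f (φ q s).1 with hF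
  have hFd : ∀ t, HasDerivAt F (deriv f (φ q t).1) t := fun t =>
    intervalIntegral.integral_hasDerivAt_right (hgc.intervalIntegrable 0 t)
      (hgc.stronglyMeasurableAtFilter _ _) hgc.continuousAt
  have hF0 : F 0 = 0 := intervalIntegral.integral_same
  -- G t = y(t) * exp(F t) is constant
  set G : ℝ → ℝ := fun t => (φ q t).2 * Real.exp (F t) with hG
  have hGd : ∀ t, HasDerivAt G 0 t := by
    intro t
    have h := (hφ2 q t).mul ((hFd t).exp)
    have he : -(φ q t).2 * deriv f (φ q t).1 * Real.exp (F t) +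
        (φ q t).2 * (Real.exp (F t) * deriv f (φ q t).1) = 0 := by ring
    exact he ▸ h
  have hGc : ∀ t, G t = y₀ := by
    intro t
    have := is_const_of_deriv_eq_zero (f := G)
      (fun s => (hGd s).differentiableAt) (fun s => (hGd s).deriv) t 0
    simpa [hG, hφ0, hF0, hq] using this
  have hyeq : ∀ t, (φ q t).2 = y₀ * Real.exp (-(F t)) := by
    intro t
    have h := hGc t
    have hne : Real.exp (F t) ≠ 0 := (Real.exp_pos _).ne'
    simp only [hG] at h; rw [Real.exp_neg, eq_mul_inv_iff_mul_eq₀ hne]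
    linarith [h]
  have hypos : ∀ t, 0 < (φ q t).2 := fun t => by
    rw [hyeq t]; positivity
  -- bounds on F
  have hFpos : ∀ t, 0 ≤ t → 0 ≤ F t := by
    intro t ht
    exact intervalIntegral.integral_nonneg ht (fun s _ => (hC3 _).1.le)
  have hFlow : ∀ t, t ≤ 0 → deriv f 0 * t ≤ F t := by
    intro t ht
    have h1 : (∫ s in t..(0:ℝ), deriv f (φ q s).1) ≤ ∫ s in t..(0:ℝ), deriv f 0 :=
      intervalIntegral.integral_mono_on ht (hgc.intervalIntegrable t 0)
        (intervalIntegrable_const) (fun s _ => (hC3 _).2)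
    have h2 : (∫ s in t..(0:ℝ), deriv f 0) = -(deriv f 0 * t) := by
      simp [intervalIntegral.integral_const]; ring
    have h3 : F t = -(∫ s in t..(0:ℝ), deriv f (φ q s).1) := by
      rw [hF]
      rw [← intervalIntegral.integral_symm]
    rw [h3]; linarith
  -- the integrand
  set h : ℝ → ℝ := fun t =>
    Real.sqrt ((f (φ q t).1) ^ 2 + ((φ q t).2 * deriv f (φ q t).1) ^ 2) with hh
  have hhc : Continuous h := by
    apply Real.continuous_sqrt.comp
    exact ((hf.continuous.comp hxc).pow 2).add ((hyc.mul hgc).pow 2)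
  -- pointwise bound on [0, τ]
  have hbd1 : ∀ t ∈ Set.Icc (0:ℝ) τ, h t ≤ Real.sqrt (m ^ 2 + y₀ ^ 2 * (deriv f 0) ^ 2) := by
    intro t ht
    apply Real.sqrt_le_sqrt
    have h1 : (f (φ q t).1) ^ 2 ≤ m ^ 2 := sq_le_sq' (neg_le_of_abs_le (hC2 _)) (le_of_abs_le (hC2 _))
    have hy : (φ q t).2 ≤ y₀ := by
      rw [hyeq t]
      nlinarith [Real.exp_le_one_iff.mpr (neg_nonpos_of_nonneg (hFpos t ht.1)), Real.exp_pos (-(F t))]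
    have h2 : ((φ q t).2 * deriv f (φ q t).1) ^ 2 ≤ y₀ ^ 2 * (deriv f 0) ^ 2 := by
      have hle : (φ q t).2 * deriv f (φ q t).1 ≤ y₀ * deriv f 0 :=
        mul_le_mul hy (hC3 (φ q t).1).2 (hC3 (φ q t).1).1.le hy₀.le
      have hnn : 0 ≤ (φ q t).2 * deriv f (φ q t).1 :=
        (mul_pos (hypos t) (hC3 (φ q t).1).1).le
      calc ((φ q t).2 * deriv f (φ q t).1) ^ 2 ≤ (y₀ * deriv f 0) ^ 2 :=
            pow_le_pow_left₀ hnn hle 2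
        _ = y₀ ^ 2 * (deriv f 0) ^ 2 := by ring
    linarith
  -- pointwise bound on [-τ, 0]
  have hbd2 : ∀ t ∈ Set.Icc (-τ) (0:ℝ), h t ≤
      Real.sqrt (m ^ 2 + y₀ ^ 2 * Real.exp (-2 * deriv f 0 * t) * (deriv f 0) ^ 2) := by
    intro t ht
    apply Real.sqrt_le_sqrt
    have h1 : (f (φ q t).1) ^ 2 ≤ m ^ 2 := sq_le_sq' (neg_le_of_abs_le (hC2 _)) (le_of_abs_le (hC2 _))
    have hy : (φ q t).2 ≤ y₀ * Real.exp (-(deriv f 0) * t) := by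
      rw [hyeq t]
      have : Real.exp (-(F t)) ≤ Real.exp (-(deriv f 0) * t) :=
        Real.exp_le_exp.mpr (by linarith [hFlow t ht.2])
      nlinarith
    have hexp : Real.exp (-(deriv f 0) * t) ^ 2 = Real.exp (-2 * deriv f 0 * t) := by
      rw [← Real.exp_nat_mul]; ring_nf
    have h2 : ((φ q t).2 * deriv f (φ q t).1) ^ 2 ≤
        y₀ ^ 2 * Real.exp (-2 * deriv f 0 * t) * (deriv f 0) ^ 2 := by
      have hle : (φ q t).2 * deriv f (φ q t).1 ≤
          y₀ * Real.exp (-(deriv f 0) * t) * deriv f 0 :=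
        mul_le_mul hy (hC3 (φ q t).1).2 (hC3 (φ q t).1).1.le (by positivity)
      have hnn : 0 ≤ (φ q t).2 * deriv f (φ q t).1 :=
        (mul_pos (hypos t) (hC3 (φ q t).1).1).le
      calc ((φ q t).2 * deriv f (φ q t).1) ^ 2
          ≤ (y₀ * Real.exp (-(deriv f 0) * t) * deriv f 0) ^ 2 :=
            pow_le_pow_left₀ hnn hle 2
        _ = y₀ ^ 2 * Real.exp (-2 * deriv f 0 * t) * (deriv f 0) ^ 2 := by
            rw [← hexp]; ring
    linarith
  -- compare integrals
  have hsplit : (∫ t in (-τ)..τ, h t) = (∫ t in (-τ)..(0:ℝ), h t) + ∫ t in (0:ℝ)..τ, h t :=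
    (intervalIntegral.integral_add_adjacent_intervals (hhc.intervalIntegrable _ _)
      (hhc.intervalIntegrable _ _)).symm
  have hI1 : (∫ t in (0:ℝ)..τ, h t) ≤ τ * Real.sqrt (m ^ 2 + y₀ ^ 2 * (deriv f 0) ^ 2) := by
    have := intervalIntegral.integral_mono_on hτ.le (hhc.intervalIntegrable 0 τ)
      (intervalIntegrable_const (μ := MeasureTheory.volume)) hbd1
    simpa [intervalIntegral.integral_const, smul_eq_mul] using this
  have hrhsc : Continuous fun t =>
      Real.sqrt (m ^ 2 + y₀ ^ 2 * Real.exp (-2 * deriv f 0 * t) * (deriv f 0) ^ 2) := by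
    apply Real.continuous_sqrt.comp
    exact continuous_const.add ((continuous_const.mul
      (Real.continuous_exp.comp (continuous_const.mul continuous_id))).mul continuous_const)
  have hI2 : (∫ t in (-τ)..(0:ℝ), h t) ≤
      ∫ t in (-τ)..(0:ℝ),
        Real.sqrt (m ^ 2 + y₀ ^ 2 * Real.exp (-2 * deriv f 0 * t) * (deriv f 0) ^ 2) :=
    intervalIntegral.integral_mono_on (by linarith) (hhc.intervalIntegrable _ _)
      (hrhsc.intervalIntegrable _ _) hbd2
  rw [hM τ q]
  calc (∫ t in (-τ)..τ, h t) = _ := hsplit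
    _ ≤ _ := by linarith
end

section
/- Let f : ℝ → ℝ be C¹, bounded, with f(0) = 0, f(x) > 0 for x > 0, f(x) < 0 for x < 0, and f'(x) > 0 for all x. If x : ℝ → ℝ solves x'(t) = f(x(t)) with x(0) = x₀ > 0, then x(t) → +∞ as t → +∞ and x(t) → 0 as t → −∞. Consequently, for system (Sl) the origin is a global saddle: its stable manifold (set of initial points whose forward solution converges to the origin) is exactly the y-axis, and the x-axis is contained in its unstable manifold (set of points whose backward solution converges to the origin). -/
open Filter Real Set

/-- A linear bound `|f y| ≤ K |y|` on a compact interval, from `C¹` and `f 0 = 0`. -/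
lemma linBound (f : ℝ → ℝ) (hf : ContDiff ℝ 1 f) (hf0 : f 0 = 0) (M : ℝ) (hM : 0 ≤ M) :
    ∃ K : ℝ, 0 ≤ K ∧ ∀ y ∈ Icc (-M) M, |f y| ≤ K * |y| := by
  have hd : Continuous (deriv f) := hf.continuous_deriv le_rfl
  obtain ⟨K, hK⟩ := (isCompact_Icc (a := -M) (b := M)).exists_bound_of_continuousOn
    hd.continuousOn
  refine ⟨max K 0, le_max_right _ _, fun y hy => ?_⟩
  have h0 : (0:ℝ) ∈ Icc (-M) M := by constructor <;> linarith
  have := (convex_Icc (-M) M).norm_image_sub_le_of_norm_deriv_le (C := max K 0)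
    (fun z _ => (hf.differentiable one_ne_zero).differentiableAt)
    (fun z hz => le_trans (hK z hz) (le_max_left _ _)) h0 hy
  simpa [hf0, Real.norm_eq_abs] using this

/-- Forward uniqueness of the zero solution for `x' = f(x)` when `f 0 = 0`, `f` C¹. -/
lemma zeroSol (f : ℝ → ℝ) (hf : ContDiff ℝ 1 f) (hf0 : f 0 = 0)
    (x : ℝ → ℝ) (hx : ∀ t, HasDerivAt x (f (x t)) t)
    (a b : ℝ) (hab : a ≤ b) (hxa : x a = 0) : x b = 0 := by
  have hxd : Differentiable ℝ x := fun t => (hx t).differentiableAt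
  have hxc : Continuous x := hxd.continuous
  obtain ⟨C, hC⟩ := (isCompact_Icc (a := a) (b := b)).exists_bound_of_continuousOn
    hxc.continuousOn
  set M : ℝ := max C 0 with hMdef
  have hM : 0 ≤ M := le_max_right _ _
  have hmem : ∀ s ∈ Icc a b, x s ∈ Icc (-M) M := by
    intro s hs
    have := hC s hs
    rw [Real.norm_eq_abs, abs_le] at this
    constructor
    · linarith [this.1, le_max_left C 0]
    · linarith [this.2, le_max_left C 0]
  obtain ⟨K, hK0, hK⟩ := linBound f hf hf0 M hM
  -- h s = (x s)^2 * exp (-(2K) s) is antitone on [a,b]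
  set h : ℝ → ℝ := fun s => (x s) ^ 2 * Real.exp (-(2 * K) * s) with hh
  have hder : ∀ s, HasDerivAt h
      ((2 * x s ^ 1 * f (x s)) * Real.exp (-(2 * K) * s)
        + (x s) ^ 2 * (Real.exp (-(2 * K) * s) * (-(2 * K) * 1))) s := by
    intro s
    exact ((hx s).pow 2).mul (((hasDerivAt_id s).const_mul (-(2 * K))).exp)
  have hmono : AntitoneOn h (Icc a b) := by
    apply antitoneOn_of_deriv_nonpos (convex_Icc a b)
      (Continuous.continuousOn (by continuity))
    · intro s hs
      exact ((hder s).differentiableAt).differentiableWithinAt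
    · intro s hs
      rw [interior_Icc] at hs
      rw [(hder s).deriv]
      have hxb := hK (x s) (hmem s (Ioo_subset_Icc_self hs))
      have hfb : x s * f (x s) ≤ K * (x s) ^ 2 := by
        calc x s * f (x s) ≤ |x s * f (x s)| := le_abs_self _
          _ = |x s| * |f (x s)| := abs_mul _ _
          _ ≤ |x s| * (K * |x s|) := by
              apply mul_le_mul_of_nonneg_left hxb (abs_nonneg _)
          _ = K * (x s) ^ 2 := by rw [← sq_abs]; ring
      have he : 0 < Real.exp (-(2 * K) * s) := Real.exp_pos _
      nlinarith [sq_nonneg (x s)]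
  have h1 : h b ≤ h a := hmono ⟨le_rfl, hab⟩ ⟨hab, le_rfl⟩ hab
  have h2 : h a = 0 := by simp [hh, hxa]
  have h3 : 0 ≤ (x b) ^ 2 * Real.exp (-(2 * K) * b) :=
    mul_nonneg (sq_nonneg _) (Real.exp_pos _).le
  have : (x b) ^ 2 * Real.exp (-(2 * K) * b) = 0 := le_antisymm (h2 ▸ h1) h3
  have := (mul_eq_zero.mp this).resolve_right (Real.exp_pos _).ne'
  exact pow_eq_zero_iff (by norm_num) |>.mp this

/-- Backward uniqueness via time reversal. -/
lemma zeroSolBack (f : ℝ → ℝ) (hf : ContDiff ℝ 1 f) (hf0 : f 0 = 0)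
    (x : ℝ → ℝ) (hx : ∀ t, HasDerivAt x (f (x t)) t)
    (a b : ℝ) (hab : a ≤ b) (hxb : x b = 0) : x a = 0 := by
  have hg : ContDiff ℝ 1 (fun y => -(f y)) := hf.neg
  have key := zeroSol (fun y => -(f y)) hg (by simp [hf0]) (fun s => x (-s))
    (fun s => by
      have := ((hx (-s)).comp s (hasDerivAt_neg s))
      simpa [mul_comm, Function.comp_def] using this.congr_deriv (by ring))
    (-b) (-a) (by linarith) (by simpa using hxb)
  simpa using key

/-- Main lemma: positive solutions stay positive, blow up at `+∞`, tend to `0` at `-∞`. -/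
lemma mainPos (f : ℝ → ℝ) (hf : ContDiff ℝ 1 f) (hf0 : f 0 = 0)
    (hpos : ∀ x : ℝ, 0 < x → 0 < f x) (hder : ∀ x : ℝ, 0 < deriv f x)
    (x : ℝ → ℝ) (hx : ∀ t, HasDerivAt x (f (x t)) t) (hx0 : 0 < x 0) :
    (∀ t, 0 < x t) ∧ Tendsto x atTop atTop ∧ Tendsto x atBot (nhds 0) := by
  have hxd : Differentiable ℝ x := fun t => (hx t).differentiableAt
  have hxc : Continuous x := hxd.continuous
  have fmono : StrictMono f := strictMono_of_deriv_pos hder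
  -- positivity
  have hp : ∀ t, 0 < x t := by
    intro t
    by_contra hle
    push_neg at hle
    have h0 : (0:ℝ) ∈ uIcc (x t) (x 0) := by
      rw [Set.mem_uIcc]; left; exact ⟨hle, hx0.le⟩
    obtain ⟨t₂, ht₂, hxt₂⟩ := intermediate_value_uIcc (a := t) (b := 0) hxc.continuousOn h0
    rcases le_total t₂ 0 with h | h
    · have := zeroSol f hf hf0 x hx t₂ 0 h hxt₂
      linarith
    · have := zeroSolBack f hf hf0 x hx 0 t₂ h hxt₂
      linarith
  -- x strictly monotone
  have xmono : StrictMono x := by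
    apply strictMono_of_deriv_pos
    intro t
    rw [(hx t).deriv]
    exact hpos _ (hp t)
  -- atTop
  have hTop : Tendsto x atTop atTop := by
    set c : ℝ := f (x 0) with hc
    have hcpos : 0 < c := hpos _ hx0
    have hg : ∀ t ∈ Set.Ici (0:ℝ), x 0 + c * t ≤ x t := by
      have hd : ∀ t : ℝ, HasDerivAt (fun t => x t - c * t) (f (x t) - c) t := by
        intro t
        exact ((hx t).sub ((hasDerivAt_id t).const_mul c)).congr_deriv (by ring)
      have mono : MonotoneOn (fun t => x t - c * t) (Set.Ici (0:ℝ)) := by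
        apply monotoneOn_of_deriv_nonneg (convex_Ici 0)
          (Continuous.continuousOn (by continuity))
          (fun t _ => (hd t).differentiableAt.differentiableWithinAt)
        intro t ht
        rw [interior_Ici] at ht
        rw [(hd t).deriv]
        have : x 0 ≤ x t := xmono.monotone (le_of_lt ht)
        have := fmono.monotone this
        linarith
      intro t ht
      have := mono (Set.self_mem_Ici) ht ht
      simp only [mul_zero, sub_zero] at this
      linarith
    apply tendsto_atTop_mono' _ _ (tendsto_atTop_add_const_left _ (x 0)
      (tendsto_id.const_mul_atTop hcpos))
    filter_upwards [eventually_ge_atTop (0:ℝ)] with t ht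
    exact hg t ht
  -- atBot
  have hbdd : BddBelow (Set.range x) := ⟨0, fun y ⟨t, ht⟩ => ht ▸ (hp t).le⟩
  have hBot : Tendsto x atBot (nhds (⨅ t, x t)) := tendsto_atBot_ciInf xmono.monotone hbdd
  have hL0 : (⨅ t, x t) = 0 := by
    have hLnn : 0 ≤ ⨅ t, x t := le_ciInf (fun t => (hp t).le)
    rcases hLnn.lt_or_eq with hL | hL
    · exfalso
      set L := ⨅ t, x t with hLdef
      have hle : ∀ t, L ≤ x t := fun t => ciInf_le hbdd t
      have hfL : 0 < f L := hpos _ hL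
      have hd : ∀ t : ℝ, HasDerivAt (fun t => x t - f L * t) (f (x t) - f L) t := by
        intro t
        exact ((hx t).sub ((hasDerivAt_id t).const_mul (f L))).congr_deriv (by ring)
      have mono : Monotone (fun t => x t - f L * t) := by
        apply monotone_of_deriv_nonneg
        · exact fun t => (hd t).differentiableAt
        intro t
        rw [(hd t).deriv]
        have := fmono.monotone (hle t)
        linarith
      set t₀ : ℝ := -(x 0 + 1) / f L with ht₀
      have ht₀neg : t₀ ≤ 0 := by
        apply div_nonpos_of_nonpos_of_nonneg <;> [linarith; exact hfL.le]
      have := mono ht₀neg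
      simp only [mul_zero, sub_zero] at this
      have hft₀ : f L * t₀ = -(x 0 + 1) := by
        rw [ht₀]; field_simp [hfL.ne']
      have : x t₀ ≤ -1 := by nlinarith [this]
      linarith [hp t₀]
    · exact hL.symm
  exact ⟨hp, hTop, hL0 ▸ hBot⟩

/-- Reflected version for negative initial data. -/
lemma mainNeg (f : ℝ → ℝ) (hf : ContDiff ℝ 1 f) (hf0 : f 0 = 0)
    (hneg : ∀ x : ℝ, x < 0 → f x < 0) (hder : ∀ x : ℝ, 0 < deriv f x)
    (x : ℝ → ℝ) (hx : ∀ t, HasDerivAt x (f (x t)) t) (hx0 : x 0 < 0) :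
    (∀ t, x t < 0) ∧ Tendsto x atTop atBot ∧ Tendsto x atBot (nhds 0) := by
  set g : ℝ → ℝ := fun y => -f (-y) with hg
  have hgc : ContDiff ℝ 1 g := (hf.comp contDiff_neg).neg
  have hg0 : g 0 = 0 := by simp [hg, hf0]
  have hgd : ∀ y : ℝ, HasDerivAt g (deriv f (-y)) y := by
    intro y
    have h1 : HasDerivAt (fun y : ℝ => f (-y)) (deriv f (-y) * (-1)) y :=
      ((hf.differentiable one_ne_zero).differentiableAt.hasDerivAt).comp y (hasDerivAt_neg y)
    exact h1.neg.congr_deriv (by ring)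
  have hgpos : ∀ y : ℝ, 0 < y → 0 < g y := by
    intro y hy
    have := hneg (-y) (by linarith)
    simp [hg]; linarith
  have hgder : ∀ y : ℝ, 0 < deriv g y := by
    intro y
    rw [(hgd y).deriv]
    exact hder (-y)
  have hxg : ∀ t, HasDerivAt (fun t => -x t) (g (-x t)) t := by
    intro t
    have := (hx t).neg
    exact this.congr_deriv (by show -f (x t) = -f (- -x t); rw [neg_neg])
  obtain ⟨hp, hTop, hBot⟩ := mainPos g hgc hg0 hgpos hgder (fun t => -x t) hxg (by simpa using hx0)
  refine ⟨fun t => by have := hp t; linarith, ?_, ?_⟩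
  · exact tendsto_neg_atTop_iff.mp hTop
  · have := hBot.neg
    simpa using this

/-- Let `f` be C¹, bounded, with `f(0) = 0`, `f > 0` on `(0,∞)`, `f < 0` on `(-∞,0)`,
and `f' > 0` everywhere. Then every solution of `x' = f(x)` with `x(0) > 0` tends to `+∞`
as `t → +∞` and to `0` as `t → -∞`. Consequently, for the planar system (Sl)
`x' = f(x), y' = -y f'(x)` (with flow `φ`), the origin is a global saddle: its stable
set is exactly the `y`-axis, and the `x`-axis is contained in its unstable set. -/
theorem stmt_14 (f : ℝ → ℝ) (m : ℝ) (hf : ContDiff ℝ 1 f) (hf0 : f 0 = 0)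
    (hbdd : ∀ x : ℝ, |f x| ≤ m)
    (hpos : ∀ x : ℝ, 0 < x → 0 < f x) (hneg : ∀ x : ℝ, x < 0 → f x < 0)
    (hder : ∀ x : ℝ, 0 < deriv f x)
    (φ : ℝ × ℝ → ℝ → ℝ × ℝ) (hφ0 : ∀ q : ℝ × ℝ, φ q 0 = q)
    (hφ1 : ∀ (q : ℝ × ℝ) (t : ℝ), HasDerivAt (fun s => (φ q s).1) (f (φ q t).1) t)
    (hφ2 : ∀ (q : ℝ × ℝ) (t : ℝ),
      HasDerivAt (fun s => (φ q s).2) (-(φ q t).2 * deriv f (φ q t).1) t) :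
    (∀ x : ℝ → ℝ, (∀ t : ℝ, HasDerivAt x (f (x t)) t) → 0 < x 0 →
        Tendsto x atTop atTop ∧ Tendsto x atBot (nhds 0)) ∧
      {q : ℝ × ℝ | Tendsto (φ q) atTop (nhds (0, 0))} = {q : ℝ × ℝ | q.1 = 0} ∧
      {q : ℝ × ℝ | q.2 = 0} ⊆ {q : ℝ × ℝ | Tendsto (φ q) atBot (nhds (0, 0))} := by
  have part1 : ∀ x : ℝ → ℝ, (∀ t : ℝ, HasDerivAt x (f (x t)) t) → 0 < x 0 →
      Tendsto x atTop atTop ∧ Tendsto x atBot (nhds 0) := by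
    intro x hx hx0
    obtain ⟨_, h1, h2⟩ := mainPos f hf hf0 hpos hder x hx hx0
    exact ⟨h1, h2⟩
  -- zero first-component solutions
  have hzero1 : ∀ q : ℝ × ℝ, q.1 = 0 → ∀ t, (φ q t).1 = 0 := by
    intro q hq1 t
    have hx00 : (φ q 0).1 = 0 := by rw [hφ0]; exact hq1
    rcases le_total 0 t with h | h
    · exact zeroSol f hf hf0 _ (hφ1 q) 0 t h hx00
    · exact zeroSolBack f hf hf0 _ (hφ1 q) t 0 h hx00
  refine ⟨part1, ?_, ?_⟩
  · -- stable set = y-axis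
    ext q
    simp only [Set.mem_setOf_eq]
    constructor
    · intro hq
      by_contra hq1
      have hx0 : (φ q 0).1 = q.1 := by rw [hφ0]
      have hfst : Tendsto (fun t => (φ q t).1) atTop (nhds 0) := by
        have := (continuous_fst.tendsto ((0:ℝ), (0:ℝ))).comp hq
        simpa [Function.comp_def] using this
      rcases lt_or_gt_of_ne hq1 with h | h
      · obtain ⟨_, hT, _⟩ := mainNeg f hf hf0 hneg hder _ (hφ1 q) (by rw [hx0]; exact h)
        exact not_tendsto_nhds_of_tendsto_atBot hT 0 hfst
      · obtain ⟨_, hT, _⟩ := mainPos f hf hf0 hpos hder _ (hφ1 q) (by rw [hx0]; exact h)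
        exact not_tendsto_nhds_of_tendsto_atTop hT 0 hfst
    · intro hq1
      have hxzero := hzero1 q hq1
      set c := deriv f 0 with hc
      have hcpos : 0 < c := hder 0
      have hy : ∀ t, HasDerivAt (fun s => (φ q s).2) (-(φ q t).2 * c) t := by
        intro t; have := hφ2 q t; rwa [hxzero t] at this
      have hconst : ∀ t, (φ q t).2 * Real.exp (c * t) = q.2 := by
        have hd : ∀ t, HasDerivAt (fun s => (φ q s).2 * Real.exp (c * s)) 0 t := by
          intro t
          have he : HasDerivAt (fun s : ℝ => Real.exp (c * s)) (Real.exp (c * t) * c) t := by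
            simpa using ((hasDerivAt_id t).const_mul c).exp
          have := (hy t).mul he
          exact this.congr_deriv (by ring)
        intro t
        have := is_const_of_deriv_eq_zero (fun s => (hd s).differentiableAt)
          (fun s => (hd s).deriv) t 0
        simpa [hφ0 q] using this
      have hy0 : Tendsto (fun t => (φ q t).2) atTop (nhds 0) := by
        have hform : ∀ t, (φ q t).2 = q.2 * Real.exp (-(c * t)) := by
          intro t
          rw [Real.exp_neg]
          exact (eq_mul_inv_iff_mul_eq₀ (Real.exp_pos _).ne').mpr (hconst t)
        rw [funext hform]
        have hlin : Tendsto (fun t : ℝ => -(c * t)) atTop atBot :=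
          tendsto_neg_atBot_iff.mpr (tendsto_id.const_mul_atTop hcpos)
        have := (Real.tendsto_exp_atBot.comp hlin).const_mul q.2
        simpa using this
      have hx0' : Tendsto (fun t => (φ q t).1) atTop (nhds 0) := by
        rw [funext hxzero]; exact tendsto_const_nhds
      exact hx0'.prodMk_nhds hy0
  · -- x-axis ⊆ unstable set
    intro q hq2
    simp only [Set.mem_setOf_eq] at hq2 ⊢
    have hx : ∀ t, HasDerivAt (fun s => (φ q s).1) (f ((φ q t).1)) t := hφ1 q
    have hxc : Continuous (fun t => (φ q t).1) :=
      Differentiable.continuous (fun t => (hx t).differentiableAt)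
    have hcc : Continuous (fun t => deriv f ((φ q t).1)) :=
      (hf.continuous_deriv le_rfl).comp hxc
    set C : ℝ → ℝ := fun u => ∫ s in (0:ℝ)..u, deriv f ((φ q s).1) with hCdef
    have hC : ∀ t, HasDerivAt C (deriv f ((φ q t).1)) t := by
      intro t
      exact intervalIntegral.integral_hasDerivAt_right
        (hcc.intervalIntegrable _ _)
        (hcc.stronglyMeasurableAtFilter _ _)
        hcc.continuousAt
    have hyzero : ∀ t, (φ q t).2 = 0 := by
      have hd : ∀ t, HasDerivAt (fun s => (φ q s).2 * Real.exp (C s)) 0 t := by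
        intro t
        have he : HasDerivAt (fun s => Real.exp (C s))
            (Real.exp (C t) * deriv f ((φ q t).1)) t := (hC t).exp
        have := (hφ2 q t).mul he
        exact this.congr_deriv (by ring)
      intro t
      have hcst := is_const_of_deriv_eq_zero (fun s => (hd s).differentiableAt)
        (fun s => (hd s).deriv) t 0
      have h2 : (φ q t).2 * Real.exp (C t) = 0 := by
        rw [hcst]
        simp [hφ0 q, hq2]
      exact (mul_eq_zero.mp h2).resolve_right (Real.exp_pos _).ne'
    have hx0 : (φ q 0).1 = q.1 := by rw [hφ0]
    have hfst : Tendsto (fun t => (φ q t).1) atBot (nhds 0) := by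
      rcases lt_trichotomy q.1 0 with h | h | h
      · exact (mainNeg f hf hf0 hneg hder _ hx (by rw [hx0]; exact h)).2.2
      · rw [funext (hzero1 q h)]; exact tendsto_const_nhds
      · exact (mainPos f hf hf0 hpos hder _ hx (by rw [hx0]; exact h)).2.2
    have hsnd : Tendsto (fun t => (φ q t).2) atBot (nhds 0) := by
      rw [funext hyzero]; exact tendsto_const_nhds
    exact hfst.prodMk_nhds hsnd
end

section
/- Consider the linear system on ℝᴺ given by xᵢ' = λᵢ xᵢ for i = 1, …, N−1 and x_N' = −λ_N x_N, with all λᵢ > 0. Then for every τ > 0: (i) for each i ≤ N−1 and xᵢ ∈ ℝ, M(τ; xᵢ eᵢ) = |xᵢ|(e^{λᵢτ} − e^{−λᵢτ}), and M(τ; x_N e_N) = |x_N|(e^{λ_Nτ} − e^{−λ_Nτ}); (ii) for every point x = (x₁, …, x_N) ∈ ℝᴺ, M(τ; x_N e_N) ≤ M(τ; x) ≤ M(τ; x₁ e₁) + ⋯ + M(τ; x_N e_N), where {e₁, …, e_N} is the standard basis of ℝᴺ. -/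
open Filter Real

private lemma aux_int_exp (a b c K : ℝ) (hc : c ≠ 0) :
    ∫ t in a..b, K * Real.exp (c*t) = K/c * (Real.exp (c*b) - Real.exp (c*a)) := by
  have h : ∀ t ∈ Set.uIcc a b, HasDerivAt (fun t => K/c * Real.exp (c*t)) (K * Real.exp (c*t)) t := by
    intro t _
    have h2 := (((hasDerivAt_id t).const_mul c).exp).const_mul (K/c)
    refine h2.congr_deriv ?_
    simp only [id]
    field_simp
  rw [intervalIntegral.integral_eq_sub_of_hasDerivAt h ((Continuous.intervalIntegrable (by continuity) _ _))]
  ring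

/-- For the linear system `xᵢ' = λᵢ xᵢ` (i ≠ N), `x_N' = -λ_N x_N` on Euclidean ℝᴺ
(here `N = n+1` and the last index plays the role of `N`), with all `λᵢ > 0`, and `M`
the Lagrangian descriptor computed from the flow `φ`: for every `τ > 0`,
(i) `M(τ; xᵢ eᵢ) = |xᵢ|(e^{λᵢτ} - e^{-λᵢτ})` for every axis point (in particular for
`i = N`), and (ii) `M(τ; x_N e_N) ≤ M(τ; x) ≤ Σᵢ M(τ; xᵢ eᵢ)` for every `x ∈ ℝᴺ`. -/
theorem stmt_16 (n : ℕ) (lam : Fin (n + 1) → ℝ) (hlam : ∀ i, 0 < lam i)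
    (v : EuclideanSpace ℝ (Fin (n + 1)) → EuclideanSpace ℝ (Fin (n + 1)))
    (hv : ∀ (x : EuclideanSpace ℝ (Fin (n + 1))) (i : Fin (n + 1)),
      v x i = if i = Fin.last n then -(lam i) * x i else lam i * x i)
    (φ : EuclideanSpace ℝ (Fin (n + 1)) → ℝ → EuclideanSpace ℝ (Fin (n + 1)))
    (hφ0 : ∀ q, φ q 0 = q)
    (hφ : ∀ (q : EuclideanSpace ℝ (Fin (n + 1))) (t : ℝ), HasDerivAt (φ q) (v (φ q t)) t)
    (M : ℝ → EuclideanSpace ℝ (Fin (n + 1)) → ℝ)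
    (hM : ∀ (τ : ℝ) (q : EuclideanSpace ℝ (Fin (n + 1))),
      M τ q = ∫ t in (-τ)..τ, ‖v (φ q t)‖) :
    ∀ τ > 0,
      (∀ (i : Fin (n + 1)) (xi : ℝ),
        M τ (EuclideanSpace.single i xi) =
          |xi| * (Real.exp (lam i * τ) - Real.exp (-(lam i) * τ))) ∧
      (∀ x : EuclideanSpace ℝ (Fin (n + 1)),
        M τ (EuclideanSpace.single (Fin.last n) (x (Fin.last n))) ≤ M τ x ∧
          M τ x ≤ ∑ i : Fin (n + 1), M τ (EuclideanSpace.single i (x i))) := by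
  intro τ hτ
  set μ : Fin (n + 1) → ℝ := fun i => if i = Fin.last n then -lam i else lam i with hμdef
  have hμne : ∀ i, μ i ≠ 0 := by
    intro i
    by_cases h : i = Fin.last n
    · simp only [hμdef, if_pos h]
      exact neg_ne_zero.mpr (hlam i).ne'
    · simp only [hμdef, if_neg h]
      exact (hlam i).ne'
  have habs : ∀ i, |μ i| = lam i := by
    intro i
    by_cases h : i = Fin.last n
    · simp only [hμdef, if_pos h, abs_neg]
      exact abs_of_pos (hlam i)
    · simp only [hμdef, if_neg h]
      exact abs_of_pos (hlam i)
  -- the flow components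
  have hcomp : ∀ (q : EuclideanSpace ℝ (Fin (n + 1))) (i : Fin (n + 1)) (t : ℝ),
      φ q t i = q i * Real.exp (μ i * t) := by
    intro q i t
    have hg : ∀ s, HasDerivAt (fun s => φ q s i) (μ i * φ q s i) s := by
      intro s
      have h1 := (EuclideanSpace.proj (𝕜 := ℝ) i).hasFDerivAt.comp_hasDerivAt s (hφ q s)
      have h2 : (EuclideanSpace.proj (𝕜 := ℝ) i) (v (φ q s)) = μ i * φ q s i := by
        show v (φ q s) i = μ i * φ q s i
        rw [hv]
        by_cases h : i = Fin.last n
        · simp only [hμdef, if_pos h]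
        · simp only [hμdef, if_neg h]
      rw [h2] at h1
      exact h1
    have hd : ∀ s, HasDerivAt (fun s => φ q s i * Real.exp (-μ i * s)) 0 s := by
      intro s
      have h2 := (hg s).mul (((hasDerivAt_id s).const_mul (-μ i)).exp)
      refine h2.congr_deriv ?_
      simp only [id]
      ring
    have hc := is_const_of_deriv_eq_zero (f := fun s => φ q s i * Real.exp (-μ i * s))
      (fun s => (hd s).differentiableAt) (fun s => (hd s).deriv) t 0
    simp only [mul_zero, Real.exp_zero, mul_one] at hc
    rw [hφ0] at hc
    have he : Real.exp (-μ i * t) ≠ 0 := Real.exp_ne_zero _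
    have h3 : φ q t i = q i / Real.exp (-μ i * t) := by
      rw [eq_div_iff he]; exact hc
    rw [h3, show -μ i * t = -(μ i * t) by ring, Real.exp_neg]
    field_simp
  have hvi : ∀ (q : EuclideanSpace ℝ (Fin (n + 1))) (t : ℝ) (i : Fin (n + 1)),
      v (φ q t) i = μ i * q i * Real.exp (μ i * t) := by
    intro q t i
    rw [hv, hcomp]
    by_cases h : i = Fin.last n
    · simp only [hμdef, if_pos h]; ring
    · simp only [hμdef, if_neg h]; ring
  have hnorm : ∀ (q : EuclideanSpace ℝ (Fin (n + 1))) (t : ℝ),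
      ‖v (φ q t)‖ = Real.sqrt (∑ j, (μ j * q j * Real.exp (μ j * t)) ^ 2) := by
    intro q t
    rw [EuclideanSpace.norm_eq]
    congr 1
    exact Finset.sum_congr rfl fun j _ => by rw [hvi, Real.norm_eq_abs, sq_abs]
  have hsingle_norm : ∀ (i : Fin (n + 1)) (xi : ℝ) (t : ℝ),
      ‖v (φ (EuclideanSpace.single i xi) t)‖ = lam i * |xi| * Real.exp (μ i * t) := by
    intro i xi t
    rw [hnorm, Finset.sum_eq_single i]
    · rw [EuclideanSpace.single_apply, if_pos rfl, Real.sqrt_sq_eq_abs, abs_mul, abs_mul,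
        habs, abs_of_pos (Real.exp_pos _)]
    · intro j _ hj
      rw [EuclideanSpace.single_apply, if_neg hj]
      ring
    · simp
  have hcontg : ∀ q : EuclideanSpace ℝ (Fin (n + 1)), Continuous (fun t => ‖v (φ q t)‖) := by
    intro q
    have : (fun t => ‖v (φ q t)‖)
        = fun t => Real.sqrt (∑ j, (μ j * q j * Real.exp (μ j * t)) ^ 2) := funext (hnorm q)
    rw [this]
    exact Real.continuous_sqrt.comp (continuous_finset_sum _ fun j _ => by fun_prop)
  have hInt : ∀ q : EuclideanSpace ℝ (Fin (n + 1)),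
      IntervalIntegrable (fun t => ‖v (φ q t)‖) MeasureTheory.volume (-τ) τ :=
    fun q => (hcontg q).intervalIntegrable _ _
  constructor
  · -- part (i)
    intro i xi
    rw [hM]
    rw [intervalIntegral.integral_congr (g := fun t => (lam i * |xi|) * Real.exp (μ i * t))
      (fun t _ => by rw [hsingle_norm])]
    rw [aux_int_exp _ _ _ _ (hμne i)]
    by_cases h : i = Fin.last n
    · have hμi : μ i = -lam i := if_pos h
      rw [hμi, show -lam i * τ = -(lam i) * τ by ring, show -lam i * -τ = lam i * τ by ring]
      have hd : lam i * |xi| / -lam i = -|xi| := by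
        field_simp [(hlam i).ne']
      rw [hd]
      ring
    · have hμi : μ i = lam i := if_neg h
      rw [hμi, show lam i * -τ = -(lam i) * τ by ring]
      have hd : lam i * |xi| / lam i = |xi| := by
        field_simp [(hlam i).ne']
      rw [hd]
  · -- part (ii)
    intro x
    constructor
    · rw [hM, hM]
      apply intervalIntegral.integral_mono_on (by linarith) (hInt _) (hInt _)
      intro t _
      rw [hnorm, hnorm]
      apply Real.sqrt_le_sqrt
      have heq : ∑ j, (μ j * (EuclideanSpace.single (Fin.last n) (x (Fin.last n))) j
            * Real.exp (μ j * t)) ^ 2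
          = (μ (Fin.last n) * x (Fin.last n) * Real.exp (μ (Fin.last n) * t)) ^ 2 := by
        rw [Finset.sum_eq_single (Fin.last n)]
        · rw [EuclideanSpace.single_apply, if_pos rfl]
        · intro j _ hj
          rw [EuclideanSpace.single_apply, if_neg hj]
          ring
        · simp
      rw [heq]
      exact Finset.single_le_sum (f := fun j => (μ j * x j * Real.exp (μ j * t)) ^ 2)
        (fun j _ => sq_nonneg _) (Finset.mem_univ _)
    · rw [hM]
      have hsum : (∑ i, M τ (EuclideanSpace.single i (x i)))
          = ∫ t in (-τ)..τ, ∑ i, ‖v (φ (EuclideanSpace.single i (x i)) t)‖ := by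
        rw [intervalIntegral.integral_finset_sum (fun i _ => hInt _)]
        exact Finset.sum_congr rfl fun i _ => hM τ _
      rw [hsum]
      apply intervalIntegral.integral_mono_on (by linarith) (hInt _)
        ((continuous_finset_sum _ fun i _ => hcontg _).intervalIntegrable _ _)
      intro t _
      rw [hnorm]
      have h1 : ∑ j, (μ j * x j * Real.exp (μ j * t)) ^ 2
          ≤ (∑ j, |μ j * x j * Real.exp (μ j * t)|) ^ 2 := by
        simpa [sq_abs, mul_pow] using Finset.sum_sq_le_sq_sum_of_nonneg
          (s := Finset.univ) (f := fun j => |μ j * x j * Real.exp (μ j * t)|)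
          (fun j _ => abs_nonneg _)
      calc Real.sqrt (∑ j, (μ j * x j * Real.exp (μ j * t)) ^ 2)
          ≤ Real.sqrt ((∑ j, |μ j * x j * Real.exp (μ j * t)|) ^ 2) := Real.sqrt_le_sqrt h1
        _ = ∑ j, |μ j * x j * Real.exp (μ j * t)| :=
            Real.sqrt_sq (Finset.sum_nonneg fun j _ => abs_nonneg _)
        _ = ∑ i, ‖v (φ (EuclideanSpace.single i (x i)) t)‖ := by
            refine Finset.sum_congr rfl fun i _ => ?_
            rw [hsingle_norm, abs_mul, abs_mul, habs, abs_of_pos (Real.exp_pos _)]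
end

section
/- Consider the linear system on ℝᴺ given by xᵢ' = λᵢ xᵢ for i = 1, …, N−1 and x_N' = −λ_N x_N, with all λᵢ > 0 and λ_N > max{λᵢ : i = 1, …, N−1}. Then for every point x = (x₁, …, x_N) ∈ ℝᴺ with x_N ≠ 0, lim_{τ → ∞} M(τ; x)/M(τ; x_N e_N) = 1, where e_N is the N-th standard basis vector. -/
open Filter Real

private lemma ode_scalar (c a : ℝ) (f : ℝ → ℝ) (h0 : f 0 = a)
    (hf : ∀ t, HasDerivAt f (c * f t) t) : ∀ t, f t = a * Real.exp (c * t) := by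
  have key : ∀ t, f t * Real.exp (-(c * t)) = a := by
    have hg : ∀ s, HasDerivAt (fun s => f s * Real.exp (-(c * s))) 0 s := by
      intro s
      have he : HasDerivAt (fun s : ℝ => Real.exp (-(c * s))) (Real.exp (-(c*s)) * (-c)) s := by
        have := (Real.hasDerivAt_exp (-(c*s))).comp s (((hasDerivAt_id s).const_mul c).neg)
        simpa [Function.comp_def] using this
      have h1 : HasDerivAt (fun y => f y * Real.exp (-(c * y)))
          (c * f s * Real.exp (-(c * s)) + f s * (Real.exp (-(c * s)) * -c)) s := (hf s).mul he
      convert h1 using 1; ring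
    intro t
    have := is_const_of_deriv_eq_zero (fun s => (hg s).differentiableAt)
      (fun s => (hg s).deriv) t 0
    simpa [h0] using this
  intro t
  have h := congrArg (· * Real.exp (c * t)) (key t)
  simpa [mul_assoc, ← Real.exp_add] using h

private lemma int_kexp (k c τ : ℝ) (hc : c ≠ 0) :
    ∫ t in (-τ)..τ, k * Real.exp (c * t)
      = k / c * (Real.exp (c * τ) - Real.exp (c * (-τ))) := by
  have h : ∀ t ∈ Set.uIcc (-τ) τ,
      HasDerivAt (fun s => k / c * Real.exp (c * s)) (k * Real.exp (c * t)) t := by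
    intro t _
    have he : HasDerivAt (fun s : ℝ => Real.exp (c * s)) (Real.exp (c*t) * c) t := by
      have := (Real.hasDerivAt_exp (c*t)).comp t ((hasDerivAt_id t).const_mul c)
      simpa [Function.comp_def] using this
    have : HasDerivAt (fun y => k / c * Real.exp (c * y)) (k / c * (Real.exp (c * t) * c)) t :=
      he.const_mul (k / c)
    convert this using 1
    field_simp
  rw [intervalIntegral.integral_eq_sub_of_hasDerivAt h
    ((Continuous.intervalIntegrable (by continuity) _ _))]
  ring

/-- For the linear system `xᵢ' = λᵢ xᵢ` (i ≠ N), `x_N' = -λ_N x_N` on Euclidean ℝᴺ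
(here `N = n+1`, the last index playing the role of `N`), with all `λᵢ > 0` and
`λ_N > λᵢ` for every `i ≠ N`: for every point `x` with `x_N ≠ 0`,
`M(τ; x) / M(τ; x_N e_N) → 1` as `τ → ∞`. -/
theorem stmt_17 (n : ℕ) (lam : Fin (n + 1) → ℝ) (hlam : ∀ i, 0 < lam i)
    (hlast : ∀ i : Fin (n + 1), i ≠ Fin.last n → lam i < lam (Fin.last n))
    (v : EuclideanSpace ℝ (Fin (n + 1)) → EuclideanSpace ℝ (Fin (n + 1)))
    (hv : ∀ (x : EuclideanSpace ℝ (Fin (n + 1))) (i : Fin (n + 1)),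
      v x i = if i = Fin.last n then -(lam i) * x i else lam i * x i)
    (φ : EuclideanSpace ℝ (Fin (n + 1)) → ℝ → EuclideanSpace ℝ (Fin (n + 1)))
    (hφ0 : ∀ q, φ q 0 = q)
    (hφ : ∀ (q : EuclideanSpace ℝ (Fin (n + 1))) (t : ℝ), HasDerivAt (φ q) (v (φ q t)) t)
    (M : ℝ → EuclideanSpace ℝ (Fin (n + 1)) → ℝ)
    (hM : ∀ (τ : ℝ) (q : EuclideanSpace ℝ (Fin (n + 1))),
      M τ q = ∫ t in (-τ)..τ, ‖v (φ q t)‖)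
    (x : EuclideanSpace ℝ (Fin (n + 1))) (hx : x (Fin.last n) ≠ 0) :
    Tendsto (fun τ : ℝ =>
        M τ x / M τ (EuclideanSpace.single (Fin.last n) (x (Fin.last n))))
      atTop (nhds 1) := by
  set L := Fin.last n with hL
  set c : Fin (n + 1) → ℝ := fun i => if i = L then -lam i else lam i with hcdef
  -- explicit flow
  have hflow : ∀ (q : EuclideanSpace ℝ (Fin (n+1))) (t : ℝ) (i : Fin (n+1)),
      φ q t i = q i * Real.exp (c i * t) := by
    intro q t i
    have hcomp : ∀ s, HasDerivAt (fun s => φ q s i) (c i * φ q s i) s := by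
      intro s
      have h := (EuclideanSpace.proj i :
        EuclideanSpace ℝ (Fin (n+1)) →L[ℝ] ℝ).hasFDerivAt.comp_hasDerivAt s (hφ q s)
      have h2 : v (φ q s) i = c i * φ q s i := by
        rw [hv]; by_cases hh : i = L <;> simp [hcdef, hh]
      simp only [Function.comp_def, PiLp.proj_apply] at h
      rwa [h2] at h
    have h0 : (fun s => φ q s i) 0 = q i := by simp [hφ0]
    exact ode_scalar (c i) (q i) _ h0 hcomp t
  -- explicit components of v ∘ flow
  have hvφ : ∀ (q : EuclideanSpace ℝ (Fin (n+1))) (t : ℝ) (i : Fin (n+1)),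
      v (φ q t) i = c i * q i * Real.exp (c i * t) := by
    intro q t i
    rw [hv, hflow]
    by_cases hh : i = L <;> simp [hcdef, hh] <;> ring
  -- explicit norm
  have hnorm : ∀ (q : EuclideanSpace ℝ (Fin (n+1))) (t : ℝ),
      ‖v (φ q t)‖ = Real.sqrt (∑ i, (c i * q i * Real.exp (c i * t))^2) := by
    intro q t
    rw [EuclideanSpace.norm_eq]
    congr 1
    refine Finset.sum_congr rfl fun i _ => ?_
    rw [hvφ, Real.norm_eq_abs, sq_abs]
  -- shorthand
  set b := x L with hbdef
  have hlamN : 0 < lam L := hlam L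
  set s := EuclideanSpace.single L b with hsdef
  -- the denominator integrand
  have hSingle : ∀ t : ℝ, ‖v (φ s t)‖ = (lam L * |b|) * Real.exp (-lam L * t) := by
    intro t
    rw [hnorm]
    have hsum : (∑ i, (c i * s i * Real.exp (c i * t))^2)
        = (lam L * |b| * Real.exp (-lam L * t))^2 := by
      rw [Finset.sum_eq_single L]
      · simp [hsdef, EuclideanSpace.single_apply, hcdef]
        linear_combination (lam L ^ 2 * Real.exp (-(lam L * t)) ^ 2) * (sq_abs b).symm
      · intro i _ hi
        simp [hsdef, EuclideanSpace.single_apply, hi]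
      · simp
    rw [hsum, Real.sqrt_sq (by positivity)]
  -- pointwise lower bound for the numerator integrand
  have hLower : ∀ t : ℝ, (lam L * |b|) * Real.exp (-lam L * t) ≤ ‖v (φ x t)‖ := by
    intro t
    rw [hnorm]
    have h1 : ((lam L * |b|) * Real.exp (-lam L * t))^2
        = (c L * x L * Real.exp (c L * t))^2 := by
      simp only [hcdef, if_pos rfl]
      have hb2 : |b| ^ 2 = x L ^ 2 := sq_abs b
      linear_combination (lam L ^ 2 * Real.exp (-lam L * t) ^ 2) * hb2
    rw [← Real.sqrt_sq (by positivity : (0:ℝ) ≤ (lam L * |b|) * Real.exp (-lam L * t)), h1]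
    apply Real.sqrt_le_sqrt
    exact Finset.single_le_sum (f := fun i => (c i * x i * Real.exp (c i * t)) ^ 2)
      (fun i _ => sq_nonneg _) (Finset.mem_univ L)
  -- pointwise upper bound
  have hUpper : ∀ t : ℝ, ‖v (φ x t)‖ ≤ (lam L * |b|) * Real.exp (-lam L * t)
      + ∑ i ∈ Finset.univ.erase L, (lam i * |x i|) * Real.exp (lam i * t) := by
    intro t
    rw [hnorm]
    have h1 : Real.sqrt (∑ i, (c i * x i * Real.exp (c i * t))^2)
        ≤ ∑ i, |c i * x i * Real.exp (c i * t)| := by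
      have h2 : ∑ i, (c i * x i * Real.exp (c i * t))^2
          ≤ (∑ i, |c i * x i * Real.exp (c i * t)|)^2 := by
        have := Finset.sum_sq_le_sq_sum_of_nonneg
          (f := fun i => |c i * x i * Real.exp (c i * t)|)
          (s := (Finset.univ : Finset (Fin (n+1)))) (fun i _ => abs_nonneg _)
        simpa only [sq_abs] using this
      calc Real.sqrt (∑ i, (c i * x i * Real.exp (c i * t))^2)
          ≤ Real.sqrt ((∑ i, |c i * x i * Real.exp (c i * t)|)^2) := Real.sqrt_le_sqrt h2
        _ = _ := Real.sqrt_sq (Finset.sum_nonneg fun i _ => abs_nonneg _)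
    refine h1.trans ?_
    rw [← Finset.add_sum_erase _ _ (Finset.mem_univ L)]
    apply add_le_add
    · simp only [hcdef, if_pos rfl]
      rw [abs_mul, abs_mul, abs_of_pos (Real.exp_pos _), abs_neg, abs_of_pos hlamN]
    · apply Finset.sum_le_sum
      intro i hi
      have hiL : i ≠ L := (Finset.mem_erase.mp hi).1
      simp only [hcdef, if_neg hiL]
      rw [abs_mul, abs_mul, abs_of_pos (Real.exp_pos _), abs_of_pos (hlam i)]
  -- continuity
  have hcont : ∀ q : EuclideanSpace ℝ (Fin (n+1)), Continuous fun t => ‖v (φ q t)‖ := by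
    intro q
    have he : (fun t => ‖v (φ q t)‖)
        = fun t => Real.sqrt (∑ i, (c i * q i * Real.exp (c i * t))^2) := funext (hnorm q)
    rw [he]
    exact Real.continuous_sqrt.comp (continuous_finset_sum _ fun i _ => by fun_prop)
  have hcont2 : Continuous fun t : ℝ => (lam L * |b|) * Real.exp (-lam L * t) := by fun_prop
  have hcontw : Continuous fun t : ℝ =>
      ∑ i ∈ Finset.univ.erase L, (lam i * |x i|) * Real.exp (lam i * t) :=
    continuous_finset_sum _ fun i _ => by fun_prop
  -- denominator formula
  set D : ℝ → ℝ := fun τ => |b| * (Real.exp (lam L * τ) - Real.exp (-(lam L * τ))) with hDdef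
  have hDenInt : ∀ τ : ℝ, (∫ t in (-τ)..τ, (lam L * |b|) * Real.exp (-lam L * t)) = M τ s := by
    intro τ
    rw [hM]
    exact (intervalIntegral.integral_congr (fun t _ => hSingle t)).symm
  have hDen : ∀ τ : ℝ, M τ s = D τ := by
    intro τ
    rw [← hDenInt τ, int_kexp _ _ _ (by nlinarith : -lam L ≠ 0),
      show -lam L * -τ = lam L * τ from by ring,
      show -lam L * τ = -(lam L * τ) from by ring, hDdef]
    have hne : (-lam L : ℝ) ≠ 0 := neg_ne_zero.mpr (ne_of_gt hlamN)
    rw [div_mul_eq_mul_div, div_eq_iff hne]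
    ring
  -- numerator lower bound
  have hlow : ∀ τ : ℝ, 0 ≤ τ → M τ s ≤ M τ x := by
    intro τ hτ
    rw [hM, hM]
    apply intervalIntegral.integral_mono_on (by linarith)
      ((hcont s).intervalIntegrable _ _) ((hcont x).intervalIntegrable _ _)
    intro t _
    rw [hSingle]
    exact hLower t
  -- numerator upper bound
  set E : ℝ → ℝ := fun τ => ∑ i ∈ Finset.univ.erase L,
      |x i| * (Real.exp (lam i * τ) - Real.exp (-(lam i * τ))) with hEdef
  have hupp : ∀ τ : ℝ, 0 ≤ τ → M τ x ≤ M τ s + E τ := by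
    intro τ hτ
    have h1 : M τ x ≤ ∫ t in (-τ)..τ, ((lam L * |b|) * Real.exp (-lam L * t)
        + ∑ i ∈ Finset.univ.erase L, (lam i * |x i|) * Real.exp (lam i * t)) := by
      rw [hM]
      apply intervalIntegral.integral_mono_on (by linarith)
        ((hcont x).intervalIntegrable _ _) ((hcont2.add hcontw).intervalIntegrable _ _)
      intro t _
      exact hUpper t
    refine h1.trans (le_of_eq ?_)
    rw [intervalIntegral.integral_add (hcont2.intervalIntegrable _ _)
      (hcontw.intervalIntegrable _ _)]
    congr 1
    · exact hDenInt τ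
    · rw [intervalIntegral.integral_finset_sum
        (fun i _ => (Continuous.intervalIntegrable (by fun_prop) _ _))]
      refine Finset.sum_congr rfl fun i _ => ?_
      rw [int_kexp _ _ _ (ne_of_gt (hlam i)),
        show lam i * -τ = -(lam i * τ) from by ring]
      field_simp [(hlam i).ne']
  -- constants
  have hb : (0:ℝ) < |b| := abs_pos.mpr hx
  set κ : ℝ := 1 - Real.exp (-(2 * lam L)) with hκdef
  have hκ : 0 < κ := by
    have h := Real.exp_lt_exp.mpr (show -(2 * lam L) < 0 by nlinarith)
    simp only [Real.exp_zero] at h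
    linarith
  have hD1 : ∀ τ : ℝ, 1 ≤ τ → |b| * κ * Real.exp (lam L * τ) ≤ D τ := by
    intro τ hτ
    have h1 : Real.exp (-(lam L * τ)) ≤ Real.exp (-(2 * lam L)) * Real.exp (lam L * τ) := by
      rw [← Real.exp_add]
      exact Real.exp_le_exp.mpr (by nlinarith)
    have h2 : 0 < Real.exp (lam L * τ) := Real.exp_pos _
    rw [hDdef]
    simp only [hκdef]
    nlinarith
  have hDpos : ∀ τ : ℝ, 1 ≤ τ → 0 < D τ := by
    intro τ hτ
    exact lt_of_lt_of_le (by positivity) (hD1 τ hτ)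
  -- the comparison function
  set F : ℝ → ℝ := fun τ => ∑ i ∈ Finset.univ.erase L,
      (|x i| / (|b| * κ)) * Real.exp ((lam i - lam L) * τ) with hFdef
  have hFnonneg : ∀ τ, 0 ≤ F τ :=
    fun τ => Finset.sum_nonneg fun i _ => by positivity
  have hEF : ∀ τ : ℝ, 1 ≤ τ → E τ ≤ F τ * D τ := by
    intro τ hτ
    have h1 : E τ ≤ ∑ i ∈ Finset.univ.erase L, |x i| * Real.exp (lam i * τ) := by
      refine Finset.sum_le_sum fun i _ => ?_
      nlinarith [Real.exp_pos (-(lam i * τ)), abs_nonneg (x i)]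
    have h2 : (∑ i ∈ Finset.univ.erase L, |x i| * Real.exp (lam i * τ))
        = F τ * (|b| * κ * Real.exp (lam L * τ)) := by
      rw [hFdef, Finset.sum_mul]
      refine Finset.sum_congr rfl fun i _ => ?_
      rw [sub_mul, Real.exp_sub]
      field_simp
    have h3 : F τ * (|b| * κ * Real.exp (lam L * τ)) ≤ F τ * D τ :=
      mul_le_mul_of_nonneg_left (hD1 τ hτ) (hFnonneg τ)
    linarith
  -- F tends to 0
  have hF0 : Tendsto F atTop (nhds 0) := by
    have h : Tendsto (fun τ : ℝ => ∑ i ∈ Finset.univ.erase L,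
        (|x i| / (|b| * κ)) * Real.exp ((lam i - lam L) * τ)) atTop
        (nhds (∑ i ∈ Finset.univ.erase L, (0:ℝ))) := by
      refine tendsto_finset_sum _ fun i hi => ?_
      have hiL : i ≠ L := (Finset.mem_erase.mp hi).1
      have hneg : lam i - lam L < 0 := by have := hlast i hiL; linarith
      have htop : Tendsto (fun τ : ℝ => (lam i - lam L) * τ) atTop atBot := by
        simpa using tendsto_id.const_mul_atTop_of_neg hneg
      have hexp : Tendsto (fun τ : ℝ => Real.exp ((lam i - lam L) * τ)) atTop (nhds 0) :=
        Real.tendsto_exp_atBot.comp htop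
      simpa using hexp.const_mul (|x i| / (|b| * κ))
    simp only [Finset.sum_const_zero] at h
    exact h
  -- squeeze
  have hone : Tendsto (fun τ : ℝ => 1 + F τ) atTop (nhds 1) := by
    simpa using tendsto_const_nhds.add hF0
  refine tendsto_of_tendsto_of_tendsto_of_le_of_le' tendsto_const_nhds hone ?_ ?_
  · filter_upwards [eventually_ge_atTop (1:ℝ)] with τ hτ
    rw [hDen τ]
    rw [le_div_iff₀ (hDpos τ hτ), one_mul]
    calc D τ = M τ s := (hDen τ).symm
      _ ≤ M τ x := hlow τ (by linarith)
  · filter_upwards [eventually_ge_atTop (1:ℝ)] with τ hτ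
    rw [hDen τ, div_le_iff₀ (hDpos τ hτ)]
    calc M τ x ≤ M τ s + E τ := hupp τ (by linarith)
      _ ≤ D τ + F τ * D τ := by rw [hDen τ]; linarith [hEF τ hτ]
      _ = (1 + F τ) * D τ := by ring
end

section
/- (Theorem 3.) Consider the linear system on ℝᴺ given by xᵢ' = λᵢ xᵢ for i = 1, …, N−1 and x_N' = −λ_N x_N, with all λᵢ > 0 and λ_N > max{λᵢ : i = 1, …, N−1}, and fix a > 0. Fix (x₁, …, x_{N−1}) ∈ [−a, a]^{N−1} and x_N > 0. Then for every ε > 0 there exists T > 0 such that for all τ > T, any ỹ > 0 satisfying M(τ; (x₁, …, x_{N−1}, ỹ)) = M(τ; x_N e_N) must satisfy |ỹ − x_N| < ε. In other words, the contour-surfaces of M in a neighbourhood of the x_N-axis converge, as τ → ∞, to hyperplanes parallel to {x_N = 0}. -/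
open Filter Real

private lemma stmt18_ode_exp (c : ℝ) (g : ℝ → ℝ) (hg : ∀ t, HasDerivAt g (c * g t) t) (t : ℝ) :
    g t = g 0 * Real.exp (c * t) := by
  have key : ∀ s : ℝ, g s * Real.exp (-c * s) = g 0 := by
    intro s
    have hd : ∀ u : ℝ, HasDerivAt (fun w => g w * Real.exp (-c * w)) 0 u := by
      intro u
      have h1 : HasDerivAt (fun w : ℝ => Real.exp (-c * w)) (Real.exp (-c * u) * (-c)) u := by
        simpa using ((hasDerivAt_id u).const_mul (-c)).exp
      have := (hg u).mul h1
      refine this.congr_deriv ?_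
      ring
    have hdiff : Differentiable ℝ (fun w => g w * Real.exp (-c * w)) :=
      fun u => (hd u).differentiableAt
    have := is_const_of_deriv_eq_zero hdiff (fun u => (hd u).deriv) s 0
    simpa using this
  have hks := key t
  have h2 : Real.exp (-c * t) * Real.exp (c * t) = 1 := by
    rw [← Real.exp_add]; ring_nf; exact Real.exp_zero
  calc g t = g t * (Real.exp (-c * t) * Real.exp (c * t)) := by rw [h2]; ring
    _ = (g t * Real.exp (-c * t)) * Real.exp (c * t) := by ring
    _ = g 0 * Real.exp (c * t) := by rw [hks]

private lemma stmt18_coord_le_norm {m : ℕ} (w : EuclideanSpace ℝ (Fin m)) (i : Fin m) :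
    |w i| ≤ ‖w‖ := by
  rw [EuclideanSpace.norm_eq, ← Real.sqrt_sq_eq_abs]
  apply Real.sqrt_le_sqrt
  have : |w i| ^ 2 ≤ ∑ j, ‖w j‖ ^ 2 := by
    have := Finset.single_le_sum (f := fun j => ‖w j‖ ^ 2) (fun j _ => by positivity)
      (Finset.mem_univ i)
    simpa [Real.norm_eq_abs, sq_abs] using this
  simpa [sq_abs] using this

private lemma stmt18_norm_le_sum_abs {m : ℕ} (w : EuclideanSpace ℝ (Fin m)) :
    ‖w‖ ≤ ∑ i, |w i| := by
  rw [EuclideanSpace.norm_eq]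
  have h1 : ∑ j, ‖w j‖ ^ 2 ≤ (∑ i, |w i|) ^ 2 := by
    rw [sq, Finset.sum_mul]
    apply Finset.sum_le_sum
    intro i _
    have h2 : |w i| ≤ (∑ j, |w j|) :=
      Finset.single_le_sum (f := fun j => |w j|) (fun j _ => abs_nonneg _) (Finset.mem_univ i)
    calc ‖w i‖ ^ 2 = |w i| * |w i| := by rw [Real.norm_eq_abs, sq]
      _ ≤ |w i| * (∑ j, |w j|) := by nlinarith [abs_nonneg (w i)]
  calc Real.sqrt (∑ j, ‖w j‖ ^ 2) ≤ Real.sqrt ((∑ i, |w i|) ^ 2) := Real.sqrt_le_sqrt h1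
    _ = abs (∑ i, |w i|) := Real.sqrt_sq_eq_abs _
    _ = (∑ i, |w i|) := abs_of_nonneg (Finset.sum_nonneg fun i _ => abs_nonneg _)

private lemma stmt18_int_exp (μ b τ : ℝ) (hμ : μ ≠ 0) :
    ∫ t in (-τ)..τ, b * Real.exp (μ * t)
      = b / μ * (Real.exp (μ * τ) - Real.exp (-(μ * τ))) := by
  have h : ∀ t : ℝ, HasDerivAt (fun s => b / μ * Real.exp (μ * s)) (b * Real.exp (μ * t)) t := by
    intro t
    have h1 : HasDerivAt (fun s : ℝ => Real.exp (μ * s)) (Real.exp (μ * t) * μ) t := by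
      simpa using ((hasDerivAt_id t).const_mul μ).exp
    have := h1.const_mul (b / μ)
    refine this.congr_deriv ?_
    field_simp
  rw [intervalIntegral.integral_eq_sub_of_hasDerivAt (fun t _ => h t)
    (Continuous.intervalIntegrable (by continuity) _ _)]
  rw [show μ * -τ = -(μ * τ) by ring]
  ring

private lemma stmt18_cont (k b : ℝ) : Continuous (fun t : ℝ => b * Real.exp (k * t)) :=
  continuous_const.mul (Real.continuous_exp.comp (continuous_const.mul continuous_id))

set_option maxHeartbeats 1000000 in
/-- (Theorem 3.) For the linear system `xᵢ' = λᵢ xᵢ` (i ≠ N), `x_N' = -λ_N x_N` on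
Euclidean ℝᴺ (`N = n+1`, last index = `N`), with all `λᵢ > 0`, `λ_N > λᵢ` for `i ≠ N`,
and `a > 0`: fix `x` with `xᵢ ∈ [-a,a]` for `i ≠ N` and `x_N > 0`. For every `ε > 0`
there is `T > 0` such that for all `τ > T`, any `ỹ > 0` with
`M(τ; (x₁,…,x_{N-1},ỹ)) = M(τ; x_N e_N)` satisfies `|ỹ - x_N| < ε`: the contour
surfaces of `M` near the `x_N`-axis converge to hyperplanes parallel to `{x_N = 0}`. -/
theorem stmt_18 (n : ℕ) (lam : Fin (n + 1) → ℝ) (hlam : ∀ i, 0 < lam i)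
    (hlast : ∀ i : Fin (n + 1), i ≠ Fin.last n → lam i < lam (Fin.last n))
    (a : ℝ) (ha : 0 < a)
    (v : EuclideanSpace ℝ (Fin (n + 1)) → EuclideanSpace ℝ (Fin (n + 1)))
    (hv : ∀ (x : EuclideanSpace ℝ (Fin (n + 1))) (i : Fin (n + 1)),
      v x i = if i = Fin.last n then -(lam i) * x i else lam i * x i)
    (φ : EuclideanSpace ℝ (Fin (n + 1)) → ℝ → EuclideanSpace ℝ (Fin (n + 1)))
    (hφ0 : ∀ q, φ q 0 = q)
    (hφ : ∀ (q : EuclideanSpace ℝ (Fin (n + 1))) (t : ℝ), HasDerivAt (φ q) (v (φ q t)) t)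
    (M : ℝ → EuclideanSpace ℝ (Fin (n + 1)) → ℝ)
    (hM : ∀ (τ : ℝ) (q : EuclideanSpace ℝ (Fin (n + 1))),
      M τ q = ∫ t in (-τ)..τ, ‖v (φ q t)‖)
    (x : EuclideanSpace ℝ (Fin (n + 1)))
    (hxi : ∀ i : Fin (n + 1), i ≠ Fin.last n → x i ∈ Set.Icc (-a) a)
    (hxN : 0 < x (Fin.last n)) :
    ∀ ε > 0, ∃ T > 0, ∀ τ > T, ∀ ytil > 0,
      M τ (x + EuclideanSpace.single (Fin.last n) (ytil - x (Fin.last n))) =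
          M τ (EuclideanSpace.single (Fin.last n) (x (Fin.last n))) →
        |ytil - x (Fin.last n)| < ε := by
  classical
  set L : Fin (n + 1) := Fin.last n with hLdef
  set c : Fin (n + 1) → ℝ := fun i => if i = L then -(lam i) else lam i with hcdef
  have hcL : c L = -(lam L) := by simp [hcdef]
  have hcne : ∀ i, i ≠ L → c i = lam i := by intro i hi; simp [hcdef, hi]
  -- Step 1: explicit solution
  have key : ∀ (q : EuclideanSpace ℝ (Fin (n + 1))) (t : ℝ) (i : Fin (n + 1)),
      φ q t i = q i * Real.exp (c i * t) := by
    intro q t i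
    have hg : ∀ s : ℝ, HasDerivAt (fun u => φ q u i) (c i * φ q s i) s := by
      intro s
      have h1 := ((EuclideanSpace.proj i).hasFDerivAt.comp_hasDerivAt s (hφ q s))
      have h2 : (v (φ q s)) i = c i * φ q s i := by
        rw [hv]; simp only [hcdef]; split_ifs <;> ring
      rw [show (c i * φ q s i) = (EuclideanSpace.proj i) (v (φ q s)) by simp [h2]]
      exact h1
    have := stmt18_ode_exp (c i) (fun u => φ q u i) hg t
    simpa [hφ0] using this
  -- Step 2: norm of the field along the flow
  have vφ : ∀ (q : EuclideanSpace ℝ (Fin (n + 1))) (t : ℝ) (i : Fin (n + 1)),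
      v (φ q t) i = c i * q i * Real.exp (c i * t) := by
    intro q t i
    rw [hv, key]
    simp only [hcdef]
    split_ifs <;> ring
  -- lower bound pointwise
  have hlow : ∀ (q : EuclideanSpace ℝ (Fin (n + 1))), 0 ≤ q L → ∀ t : ℝ,
      lam L * q L * Real.exp (-(lam L) * t) ≤ ‖v (φ q t)‖ := by
    intro q hq t
    have h1 := stmt18_coord_le_norm (v (φ q t)) L
    rw [vφ q t L, hcL] at h1
    have hnp : (-(lam L)) * q L * Real.exp (-(lam L) * t) ≤ 0 := by
      nlinarith [mul_nonneg (mul_nonneg (hlam L).le hq) (Real.exp_pos (-(lam L) * t)).le]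
    calc lam L * q L * Real.exp (-(lam L) * t)
        = |(-(lam L)) * q L * Real.exp (-(lam L) * t)| := by
          rw [abs_of_nonpos hnp]; ring
      _ ≤ ‖v (φ q t)‖ := h1
  -- upper bound pointwise
  have hup : ∀ (q : EuclideanSpace ℝ (Fin (n + 1))), 0 ≤ q L → (∀ i, i ≠ L → |q i| ≤ a) →
      ∀ t : ℝ, ‖v (φ q t)‖ ≤
        lam L * q L * Real.exp (-(lam L) * t)
          + ∑ i ∈ Finset.univ.erase L, lam i * a * Real.exp (lam i * t) := by
    intro q hq hqa t
    have h1 := stmt18_norm_le_sum_abs (v (φ q t))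
    have h2 : (∑ i, |v (φ q t) i|)
        = |v (φ q t) L| + ∑ i ∈ Finset.univ.erase L, |v (φ q t) i| :=
      (Finset.add_sum_erase _ _ (Finset.mem_univ L)).symm
    have hnp : (-(lam L)) * q L * Real.exp (-(lam L) * t) ≤ 0 := by
      nlinarith [mul_nonneg (mul_nonneg (hlam L).le hq) (Real.exp_pos (-(lam L) * t)).le]
    have h3 : |v (φ q t) L| = lam L * q L * Real.exp (-(lam L) * t) := by
      rw [vφ q t L, hcL, abs_of_nonpos hnp]; ring
    have h4 : ∑ i ∈ Finset.univ.erase L, |v (φ q t) i|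
        ≤ ∑ i ∈ Finset.univ.erase L, lam i * a * Real.exp (lam i * t) := by
      apply Finset.sum_le_sum
      intro i hi
      have hiL : i ≠ L := Finset.ne_of_mem_erase hi
      rw [vφ q t i, hcne i hiL, abs_mul, abs_mul, abs_of_pos (hlam i),
        abs_of_pos (Real.exp_pos _)]
      have := hqa i hiL
      exact mul_le_mul_of_nonneg_right (mul_le_mul_of_nonneg_left this (hlam i).le)
        (Real.exp_pos _).le
    calc ‖v (φ q t)‖ ≤ ∑ i, |v (φ q t) i| := h1
      _ = |v (φ q t) L| + ∑ i ∈ Finset.univ.erase L, |v (φ q t) i| := h2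
      _ ≤ lam L * q L * Real.exp (-(lam L) * t)
          + ∑ i ∈ Finset.univ.erase L, lam i * a * Real.exp (lam i * t) := by
        rw [h3]; linarith
  -- norm formula and continuity of the integrand
  have normφ : ∀ (q : EuclideanSpace ℝ (Fin (n + 1))) (t : ℝ),
      ‖v (φ q t)‖ = Real.sqrt (∑ i, (c i * q i * Real.exp (c i * t)) ^ 2) := by
    intro q t
    rw [EuclideanSpace.norm_eq]
    congr 1
    apply Finset.sum_congr rfl
    intro i _
    rw [vφ, Real.norm_eq_abs, sq_abs]
  have hcont : ∀ q : EuclideanSpace ℝ (Fin (n + 1)), Continuous (fun t => ‖v (φ q t)‖) := by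
    intro q
    have he : (fun t => ‖v (φ q t)‖)
        = fun t => Real.sqrt (∑ i, (c i * q i * Real.exp (c i * t)) ^ 2) := funext (normφ q)
    rw [he]
    apply Real.continuous_sqrt.comp
    apply continuous_finset_sum
    intro i _
    exact (stmt18_cont (c i) (c i * q i)).pow 2
  intro ε hε
  set f : ℝ → ℝ := fun τ => Real.exp (lam L * τ) - Real.exp (-(lam L * τ)) with hfdef
  set S : ℝ → ℝ := fun τ => ∑ i ∈ Finset.univ.erase L, a * Real.exp (lam i * τ) with hSdef
  -- the basic integral
  have hintL : ∀ y τ : ℝ,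
      (∫ t in (-τ)..τ, lam L * y * Real.exp (-(lam L) * t)) = y * f τ := by
    intro y τ
    have h := stmt18_int_exp (-(lam L)) (lam L * y) τ (by simpa using (hlam L).ne')
    rw [h, show -(-(lam L) * τ) = lam L * τ by ring, show (-(lam L)) * τ = -(lam L * τ) by ring]
    rw [show lam L * y / -(lam L) = -y by rw [mul_comm, div_neg, mul_div_assoc, div_self (hlam L).ne', mul_one]]
    simp only [hfdef]
    ring
  -- integral of the upper bound function
  have hint2 : ∀ τ : ℝ, IntervalIntegrable
      (fun t => ∑ i ∈ Finset.univ.erase L, lam i * a * Real.exp (lam i * t))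
      MeasureTheory.volume (-τ) τ := by
    intro τ
    apply Continuous.intervalIntegrable
    apply continuous_finset_sum
    intro i _
    exact stmt18_cont (lam i) (lam i * a)
  have hint1 : ∀ y τ : ℝ, IntervalIntegrable
      (fun t => lam L * y * Real.exp (-(lam L) * t)) MeasureTheory.volume (-τ) τ := by
    intro y τ
    exact (stmt18_cont (-(lam L)) (lam L * y)).intervalIntegrable _ _
  have hintU : ∀ y τ : ℝ,
      (∫ t in (-τ)..τ, (lam L * y * Real.exp (-(lam L) * t)
          + ∑ i ∈ Finset.univ.erase L, lam i * a * Real.exp (lam i * t)))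
        ≤ y * f τ + S τ := by
    intro y τ
    rw [intervalIntegral.integral_add (hint1 y τ) (hint2 τ), hintL]
    have h3 : (∫ t in (-τ)..τ, ∑ i ∈ Finset.univ.erase L, lam i * a * Real.exp (lam i * t))
        = ∑ i ∈ Finset.univ.erase L,
            (∫ t in (-τ)..τ, lam i * a * Real.exp (lam i * t)) := by
      apply intervalIntegral.integral_finset_sum
      intro i _
      exact (stmt18_cont (lam i) (lam i * a)).intervalIntegrable _ _
    rw [h3]
    have h4 : ∑ i ∈ Finset.univ.erase L, (∫ t in (-τ)..τ, lam i * a * Real.exp (lam i * t))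
        ≤ S τ := by
      simp only [hSdef]
      apply Finset.sum_le_sum
      intro i _
      have h5 := stmt18_int_exp (lam i) (lam i * a) τ (hlam i).ne'
      rw [h5]
      have hne : lam i ≠ 0 := (hlam i).ne'
      have h6 : lam i * a / lam i = a := by field_simp
      rw [h6]
      nlinarith [Real.exp_pos (-(lam i * τ)), ha.le]
    linarith
  -- limit of S/f
  have hfdiv : Tendsto (fun τ => S τ / f τ) atTop (nhds 0) := by
    have hterm : ∀ i ∈ Finset.univ.erase L,
        Tendsto (fun τ => a * Real.exp (lam i * τ) / f τ) atTop (nhds 0) := by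
      intro i hi
      have hiL : lam i < lam L := hlast i (Finset.ne_of_mem_erase hi)
      have hdiv : Tendsto (fun τ => f τ / Real.exp (lam i * τ)) atTop atTop := by
        have heq2 : ∀ τ : ℝ, f τ / Real.exp (lam i * τ)
            = Real.exp ((lam L - lam i) * τ) - Real.exp (-((lam L + lam i) * τ)) := by
          intro τ
          simp only [hfdef]
          rw [sub_div, ← Real.exp_sub, ← Real.exp_sub]
          ring_nf
        have h7 : Tendsto (fun τ : ℝ => Real.exp ((lam L - lam i) * τ)) atTop atTop :=
          Real.tendsto_exp_atTop.comp (Tendsto.const_mul_atTop (by linarith) tendsto_id)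
        have h8 : Tendsto (fun τ : ℝ => -Real.exp (-((lam L + lam i) * τ))) atTop (nhds 0) := by
          have h9 : Tendsto (fun τ : ℝ => -((lam L + lam i) * τ)) atTop atBot := by
            have := Tendsto.const_mul_atTop
              (show (0:ℝ) < lam L + lam i by nlinarith [hlam i, hlam L]) (tendsto_id (α := ℝ))
            exact tendsto_neg_atTop_atBot.comp this
          have := Real.tendsto_exp_atBot.comp h9
          simpa using this.neg
        have h10 : ∀ᶠ τ in (atTop : Filter ℝ), (-1:ℝ) ≤ -Real.exp (-((lam L + lam i) * τ)) :=
          h8.eventually_const_le (by norm_num)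
        have h11 := tendsto_atTop_add_right_of_le' atTop (-1:ℝ) h7 h10
        apply Tendsto.congr (fun τ => (heq2 τ).symm)
        simpa [sub_eq_add_neg] using h11
      have h12 := hdiv.inv_tendsto_atTop
      have h13 := h12.const_mul a
      simp only [mul_zero] at h13
      apply Tendsto.congr _ h13
      intro τ
      simp only [Pi.inv_apply, inv_div, mul_div_assoc]
    have h14 := tendsto_finset_sum (Finset.univ.erase L) hterm
    simp only [Finset.sum_const_zero] at h14
    apply Tendsto.congr _ h14
    intro τ
    simp only [hSdef, Finset.sum_div]
  have hev : ∀ᶠ τ in (atTop : Filter ℝ), S τ / f τ < ε := hfdiv.eventually_lt_const hε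
  obtain ⟨T0, hT0⟩ := eventually_atTop.mp hev
  refine ⟨max T0 1, lt_of_lt_of_le one_pos (le_max_right _ _), ?_⟩
  intro τ hτ ytil hytil heq
  have hτ0 : (0:ℝ) < τ := lt_of_lt_of_le one_pos (le_of_lt (lt_of_le_of_lt (le_max_right T0 1) hτ))
  have hτT0 : T0 ≤ τ := le_of_lt (lt_of_le_of_lt (le_max_left T0 1) hτ)
  have hGτ : S τ / f τ < ε := hT0 τ hτT0
  have hfpos : 0 < f τ := by
    simp only [hfdef]
    have : -(lam L * τ) < lam L * τ := by nlinarith [hlam L]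
    have := Real.exp_lt_exp.mpr this
    linarith
  set qt : EuclideanSpace ℝ (Fin (n + 1)) :=
    x + EuclideanSpace.single L (ytil - x L) with hqtdef
  have hqtL : qt L = ytil := by
    simp only [hqtdef]
    show x L + (EuclideanSpace.single L (ytil - x L)) L = ytil
    rw [EuclideanSpace.single_apply]
    simp
  have hqti : ∀ i, i ≠ L → qt i = x i := by
    intro i hi
    simp only [hqtdef]
    show x i + (EuclideanSpace.single L (ytil - x L)) i = x i
    rw [EuclideanSpace.single_apply, if_neg hi]
    ring
  have hqta : ∀ i, i ≠ L → |qt i| ≤ a := by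
    intro i hi
    rw [hqti i hi]
    have := hxi i hi
    exact abs_le.mpr ⟨this.1, this.2⟩
  -- value on the axis
  have hpnorm : ∀ t : ℝ, ‖v (φ (EuclideanSpace.single L (x L)) t)‖
      = lam L * x L * Real.exp (-(lam L) * t) := by
    intro t
    rw [normφ]
    rw [Finset.sum_eq_single L]
    · have hsL : (EuclideanSpace.single L (x L) : EuclideanSpace ℝ (Fin (n+1))) L = x L := by
        rw [EuclideanSpace.single_apply]; simp
      rw [hsL, hcL]
      rw [show (-(lam L) * x L * Real.exp (-(lam L) * t)) ^ 2
          = (lam L * x L * Real.exp (-(lam L) * t)) ^ 2 by ring]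
      exact Real.sqrt_sq (mul_pos (mul_pos (hlam L) hxN) (Real.exp_pos _)).le
    · intro i _ hiL
      have : (EuclideanSpace.single L (x L) : EuclideanSpace ℝ (Fin (n+1))) i = 0 := by
        rw [EuclideanSpace.single_apply, if_neg hiL]
      rw [this]; ring
    · intro h; exact absurd (Finset.mem_univ L) h
  have hMp : M τ (EuclideanSpace.single L (x L)) = x L * f τ := by
    rw [hM]
    rw [show (∫ t in (-τ)..τ, ‖v (φ (EuclideanSpace.single L (x L)) t)‖)
        = ∫ t in (-τ)..τ, lam L * x L * Real.exp (-(lam L) * t) by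
        apply intervalIntegral.integral_congr; intro t _; exact hpnorm t]
    exact hintL (x L) τ
  -- lower bound for M τ qt
  have hMlow : ytil * f τ ≤ M τ qt := by
    rw [hM]
    have := intervalIntegral.integral_mono_on (by linarith : -τ ≤ τ)
      (hint1 ytil τ) ((hcont qt).intervalIntegrable _ _)
      (fun t _ => by simpa [hqtL] using hlow qt (by rw [hqtL]; exact hytil.le) t)
    rw [hintL] at this
    exact this
  -- upper bound for M τ qt
  have hMup : M τ qt ≤ ytil * f τ + S τ := by
    rw [hM]
    have hmono := intervalIntegral.integral_mono_on (by linarith : -τ ≤ τ)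
      ((hcont qt).intervalIntegrable _ _) ((hint1 ytil τ).add (hint2 τ))
      (fun t _ => by
        have := hup qt (by rw [hqtL]; exact hytil.le) hqta t
        rwa [hqtL] at this)
    exact le_trans hmono (hintU ytil τ)
  -- conclude
  rw [hMp] at heq
  have hy_le : ytil ≤ x L := by
    have h15 : ytil * f τ ≤ x L * f τ := by rw [← heq]; exact hMlow
    exact le_of_mul_le_mul_right h15 hfpos
  have h16 : (x L - ytil) * f τ ≤ S τ := by
    have := hMup
    rw [heq] at this
    nlinarith
  have h17 : x L - ytil ≤ S τ / f τ := (le_div_iff₀ hfpos).mpr h16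
  rw [abs_sub_comm, abs_of_nonneg (by linarith)]
  linarith
end
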